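/- arXiv:2311.00212 — 9 statements merged into one kernel-verified Lean document; each statement's English description precedes it below -/
import Mathlib

section
/- Let m, n ∈ ℕ, let A : ℝ^m → ℝ^m and B : ℝ^n → ℝ^n be linear maps, and let F : ℝ^m → ℝ^n be continuously differentiable. Then the following are equivalent: (i) B(F(x)) = DF(x)(A x) for all x ∈ ℝ^m (i.e., the Lie derivative ℒ_{A,B}F vanishes identically); (ii) for every t ∈ ℝ and every x ∈ ℝ^m, F(exp(tA) x) = exp(tB)(F(x)), where exp denotes the exponential of a linear operator. -/
/-!
Along an orbit `s ↦ exp (s • A) x`, the chain rule turns `B (F y) = DF(y) (A y)` into the linear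
ODE `γ' = B γ` for `γ s = F (exp (s • A) x)`. Its unique solution with `γ 0 = F x` is
`s ↦ exp (s • B) (F x)`. Conversely, differentiating `F (exp (t • A) x) = exp (t • B) (F x)`
at `t = 0` recovers `DF(x) (A x) = B (F x)`.
-/

open NormedSpace

section

variable {V W : Type*} [NormedAddCommGroup V] [NormedSpace ℝ V] [CompleteSpace V]
  [NormedAddCommGroup W] [NormedSpace ℝ W] [CompleteSpace W]

theorem hasDerivAt_exp_smul_apply (A : V →L[ℝ] V) (x : V) (t : ℝ) :
    HasDerivAt (fun s : ℝ => exp (s • A) x) (A (exp (t • A) x)) t := by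
  simpa using (hasDerivAt_exp_smul_const' A t).clm_apply (hasDerivAt_const t x)

theorem eq_exp_smul_apply_of_hasDerivAt {B : V →L[ℝ] V} {γ : ℝ → V}
    (hγ : ∀ t, HasDerivAt γ (B (γ t)) t) (t : ℝ) : γ t = exp (t • B) (γ 0) := by
  have hsol := ODE_solution_unique_univ (v := fun _ => B) (s := fun _ => Set.univ) (t₀ := 0)
    (fun _ => B.lipschitz.lipschitzOnWith) (fun t => ⟨hγ t, trivial⟩)
    (fun t => ⟨hasDerivAt_exp_smul_apply B (γ 0) t, trivial⟩) (by simp)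
  exact congrFun hsol t

theorem map_exp_smul_apply_of_forall_fderiv_apply_eq {A : V →L[ℝ] V} {B : W →L[ℝ] W}
    {F : V → W} (hF : Differentiable ℝ F) (hAB : ∀ x, B (F x) = fderiv ℝ F x (A x))
    (t : ℝ) (x : V) : F (exp (t • A) x) = exp (t • B) (F x) := by
  have horbit : ∀ s, HasDerivAt (fun s : ℝ => F (exp (s • A) x))
      (B (F (exp (s • A) x))) s := fun s => by
    rw [hAB]
    exact (hF _).hasFDerivAt.comp_hasDerivAt s (hasDerivAt_exp_smul_apply A x s)
  simpa using eq_exp_smul_apply_of_hasDerivAt horbit t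

theorem fderiv_apply_eq_of_map_exp_smul_apply {A : V →L[ℝ] V} {B : W →L[ℝ] W} {F : V → W}
    {x : V} (hF : DifferentiableAt ℝ F x)
    (hequiv : ∀ t : ℝ, F (exp (t • A) x) = exp (t • B) (F x)) :
    B (F x) = fderiv ℝ F x (A x) := by
  have horbit := hasDerivAt_exp_smul_apply A x 0
  simp only [zero_smul, exp_zero, one_apply_eq_self] at horbit
  have hlhs : HasDerivAt (fun t : ℝ => F (exp (t • A) x)) (fderiv ℝ F x (A x)) 0 :=
    hF.hasFDerivAt.comp_hasDerivAt_of_eq 0 horbit (by simp)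
  have hrhs : HasDerivAt (fun t : ℝ => exp (t • B) (F x)) (B (F x)) 0 := by
    simpa using hasDerivAt_exp_smul_apply B (F x) 0
  exact hrhs.unique (funext hequiv ▸ hlhs)

end

/-- For linear maps `A` on `ℝ^m`, `B` on `ℝ^n` and a continuously
differentiable map `F : ℝ^m → ℝ^n`, the Lie derivative `x ↦ B (F x) − DF(x) (A x)`
vanishes identically if and only if `F (exp (t A) x) = exp (t B) (F x)` for all `t, x`. -/
theorem stmt1 (m n : ℕ)
    (A : (Fin m → ℝ) →L[ℝ] (Fin m → ℝ)) (B : (Fin n → ℝ) →L[ℝ] (Fin n → ℝ))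
    (F : (Fin m → ℝ) → (Fin n → ℝ)) (hF : ContDiff ℝ 1 F) :
    (∀ x : Fin m → ℝ, B (F x) = fderiv ℝ F x (A x)) ↔
    (∀ (t : ℝ) (x : Fin m → ℝ),
      F (NormedSpace.exp (t • A) x) = NormedSpace.exp (t • B) (F x)) := by
  have hFd : Differentiable ℝ F := hF.differentiable one_ne_zero
  exact ⟨map_exp_smul_apply_of_forall_fderiv_apply_eq hFd,
    fun h x => fderiv_apply_eq_of_map_exp_smul_apply (hFd x) (h · x)⟩
end

section
/- Let E and F be finite-dimensional real normed vector spaces, let S : E →ₗ F and S_m : E →ₗ F (m ∈ ℕ) be linear maps such that S_m → S (pointwise, equivalently in operator norm), and suppose ker S ⊆ ker S_n ⊆ ker S_m whenever n ≥ m. Then there exists M₀ ∈ ℕ such that for every m ≥ M₀, ker S_m = ker S. -/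
/-- If linear maps `S_m` between finite-dimensional real normed spaces
converge pointwise to `S` and `ker S ⊆ ker S_n ⊆ ker S_m` whenever `n ≥ m`, then
`ker S_m = ker S` for all large enough `m`. -/
theorem stmt5 {E F : Type*}
    [NormedAddCommGroup E] [NormedSpace ℝ E] [FiniteDimensional ℝ E]
    [NormedAddCommGroup F] [NormedSpace ℝ F] [FiniteDimensional ℝ F]
    (S : E →ₗ[ℝ] F) (Sm : ℕ → E →ₗ[ℝ] F)
    (hconv : ∀ x : E, Filter.Tendsto (fun k => Sm k x) Filter.atTop (nhds (S x)))
    (hker : ∀ k, LinearMap.ker S ≤ LinearMap.ker (Sm k))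
    (hmono : ∀ k l, k ≤ l → LinearMap.ker (Sm l) ≤ LinearMap.ker (Sm k)) :
    ∃ M₀ : ℕ, ∀ k ≥ M₀, LinearMap.ker (Sm k) = LinearMap.ker S := by
  classical
  set d : ℕ → ℕ := fun k => Module.finrank ℝ (LinearMap.ker (Sm k)) with hd
  -- the set of values of d has a minimum
  obtain ⟨M₀, hM₀⟩ : ∃ M₀, ∀ k, d M₀ ≤ d k := by
    obtain ⟨v, hv⟩ := Nat.sInf_mem (Set.range_nonempty d)
    exact ⟨v, fun k => hv ▸ Nat.sInf_le ⟨k, rfl⟩⟩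
  -- for k ≥ M₀, kernels are equal to ker (Sm M₀)
  have hstab : ∀ k ≥ M₀, LinearMap.ker (Sm k) = LinearMap.ker (Sm M₀) := by
    intro k hk
    have hle := hmono M₀ k hk
    have hdim : d M₀ ≤ d k := hM₀ k
    exact Submodule.eq_of_le_of_finrank_le hle hdim
  refine ⟨M₀, fun k hk => ?_⟩
  rw [hstab k hk]
  apply le_antisymm _ (hker M₀)
  intro x hx
  have hx0 : ∀ l ≥ M₀, Sm l x = 0 := by
    intro l hl
    have : x ∈ LinearMap.ker (Sm l) := by rw [hstab l hl]; exact hx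
    exact this
  have : Filter.Tendsto (fun l => Sm l x) Filter.atTop (nhds (0 : F)) := by
    apply Filter.Tendsto.congr' _ tendsto_const_nhds
    filter_upwards [Filter.eventually_ge_atTop M₀] with l hl
    exact (hx0 l hl).symm
  have h0 := tendsto_nhds_unique (hconv x) this
  simpa [LinearMap.mem_ker] using h0
end

section
/- Let E be a finite-dimensional real inner product space, let Z be a separable metric space equipped with its Borel σ-algebra, and let μ be a Borel probability measure on Z that is strictly positive (μ(U) > 0 for every nonempty open U ⊆ Z). Let ψ : E × Z → ℝ^d be linear in its first argument, continuous in its second argument for each fixed first argument, and satisfy ∫_Z ‖ψ(ξ, z)‖² dμ(z) < ∞ for every ξ ∈ E. Let (z_i)_{i ≥ 1} be an i.i.d. sequence of Z-valued random variables with law μ, defined on some probability space. Then almost surely there exists an integer M₀ such that for every m ≥ M₀, { ξ ∈ E : Σ_{i=1}^m ‖ψ(ξ, z_i)‖² = 0 } = { ξ ∈ E : ∫_Z ‖ψ(ξ, z)‖² dμ(z) = 0 } = { ξ ∈ E : ψ(ξ, z) = 0 for all z ∈ Z }. -/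
/-!
The integral `∫ ‖ψ(ξ, ·)‖² dμ` vanishes iff `ψ(ξ, ·)` vanishes `μ`-a.e., hence everywhere, since
`ψ(ξ, ·)` is continuous and `μ` charges every nonempty open set. For the sample, every basic open
set of a countable basis has positive mass, so by independence it is almost surely hit; the
sample is therefore almost surely dense, and a continuous `ψ(ξ, ·)` vanishing on it vanishes
everywhere. Finally the empirical nullspaces `⋂_{i<m} ker ψ(·, zᵢ)` form a decreasing chain of
subspaces of the finite-dimensional `E`, which stabilizes at `⋂ᵢ ker ψ(·, zᵢ)`.
-/

open MeasureTheory ProbabilityTheory TopologicalSpace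

theorem MeasureTheory.integral_norm_sq_eq_zero_iff {Z F : Type*} [TopologicalSpace Z]
    [MeasurableSpace Z] {μ : Measure Z} [μ.IsOpenPosMeasure] [NormedAddCommGroup F]
    {f : Z → F} (hf : Continuous f) (hint : Integrable (fun z => ‖f z‖ ^ 2) μ) :
    ∫ z, ‖f z‖ ^ 2 ∂μ = 0 ↔ f = 0 := by
  have hf_sq : Continuous fun z => ‖f z‖ ^ 2 := by fun_prop
  rw [integral_eq_zero_iff_of_nonneg (fun _ => sq_nonneg _) hint,
    hf_sq.ae_eq_iff_eq μ continuous_zero]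
  simp only [funext_iff, Pi.zero_apply, sq_eq_zero_iff, norm_eq_zero]

section Sampling

variable {Ω Z : Type*} [MeasurableSpace Ω] [MeasurableSpace Z] {P : Measure Ω} {μ : Measure Z}
  [IsProbabilityMeasure μ] {z : ℕ → Ω → Z}

theorem ProbabilityTheory.iIndepFun.measure_forall_notMem_eq_zero
    (hindep : iIndepFun z P) (hmeas : ∀ i, Measurable (z i)) (hlaw : ∀ i, P.map (z i) = μ)
    {U : Set Z} (hU : MeasurableSet U) (hμU : 0 < μ U) :
    P {ω | ∀ i, z i ω ∉ U} = 0 := by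
  have hmiss_lt_one : μ Uᶜ < 1 := by
    rw [prob_compl_eq_one_sub hU]
    exact ENNReal.sub_lt_self ENNReal.one_ne_top one_ne_zero hμU.ne'
  have hmiss_le_pow (m : ℕ) : P {ω | ∀ i, z i ω ∉ U} ≤ μ Uᶜ ^ m :=
    calc P {ω | ∀ i, z i ω ∉ U}
        ≤ P (⋂ i ∈ Finset.range m, z i ⁻¹' Uᶜ) :=
          measure_mono fun ω hω => Set.mem_iInter₂.mpr fun i _ => hω i
      _ = ∏ i ∈ Finset.range m, P (z i ⁻¹' Uᶜ) :=
          hindep.meas_biInter fun i _ => ⟨Uᶜ, hU.compl, rfl⟩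
      _ = ∏ _i ∈ Finset.range m, μ Uᶜ :=
          Finset.prod_congr rfl fun i _ => by rw [← hlaw i, Measure.map_apply (hmeas i) hU.compl]
      _ = μ Uᶜ ^ m := by rw [Finset.prod_const, Finset.card_range]
  exact le_antisymm
    (ge_of_tendsto' (ENNReal.tendsto_pow_atTop_nhds_zero_of_lt_one hmiss_lt_one) hmiss_le_pow)
    zero_le

theorem ProbabilityTheory.iIndepFun.ae_denseRange [TopologicalSpace Z] [SecondCountableTopology Z]
    [OpensMeasurableSpace Z] [μ.IsOpenPosMeasure]
    (hindep : iIndepFun z P) (hmeas : ∀ i, Measurable (z i)) (hlaw : ∀ i, P.map (z i) = μ) :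
    ∀ᵐ ω ∂P, DenseRange fun i => z i ω := by
  have hhit : ∀ᵐ ω ∂P, ∀ U ∈ countableBasis Z, ∃ i, z i ω ∈ U := by
    refine (ae_ball_iff (countable_countableBasis Z)).mpr fun U hU => ?_
    have hUopen := isOpen_of_mem_countableBasis hU
    have hUne : U.Nonempty :=
      Set.nonempty_iff_ne_empty.mpr fun h => empty_notMem_countableBasis Z (h ▸ hU)
    refine measure_mono_null (fun ω hω => ?_) (hindep.measure_forall_notMem_eq_zero hmeas hlaw
      hUopen.measurableSet (hUopen.measure_pos μ hUne))
    simpa using hω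
  filter_upwards [hhit] with ω hω
  refine (isBasis_countableBasis Z).dense_iff.mpr fun U hU _ => ?_
  obtain ⟨i, hi⟩ := hω U hU
  exact ⟨z i ω, hi, i, rfl⟩

end Sampling

theorem IsArtinian.exists_biInf_lt_eq_iInf {R M : Type*} [Ring R] [AddCommGroup M] [Module R M]
    [IsArtinian R M] (p : ℕ → Submodule R M) :
    ∃ M₀, ∀ m ≥ M₀, ⨅ i < m, p i = ⨅ i, p i := by
  set W : ℕ → Submodule R M := fun m => ⨅ i < m, p i
  obtain ⟨M₀, hM₀⟩ := IsArtinian.monotone_stabilizes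
    ⟨fun m => OrderDual.toDual (W m), fun m n (hmn : m ≤ n) =>
      (biInf_mono fun i (hi : i < m) => hi.trans_le hmn : W n ≤ W m)⟩
  have hW : ∀ m ≥ M₀, W m = W M₀ := fun m hm => (hM₀ m hm).symm
  refine ⟨M₀, fun m hm => le_antisymm (le_iInf fun i => ?_) (le_iInf₂ fun i _ => iInf_le p i)⟩
  calc W m = W (max M₀ (i + 1)) := by rw [hW m hm, hW _ (le_max_left _ _)]
    _ ≤ p i := biInf_le p (Nat.lt_of_succ_le (le_max_right _ _))

theorem stmt6_general
    {E : Type*} [NormedAddCommGroup E] [InnerProductSpace ℝ E] [FiniteDimensional ℝ E]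
    {Z : Type*} [MetricSpace Z] [TopologicalSpace.SeparableSpace Z]
    [MeasurableSpace Z] [BorelSpace Z]
    (μ : Measure Z) [IsProbabilityMeasure μ]
    (hμpos : ∀ U : Set Z, IsOpen U → U.Nonempty → 0 < μ U)
    (d : ℕ) (ψ : E → Z → EuclideanSpace ℝ (Fin d))
    (hlin : ∀ z : Z, IsLinearMap ℝ fun ξ : E => ψ ξ z)
    (hcont : ∀ ξ : E, Continuous (ψ ξ))
    (hint : ∀ ξ : E, Integrable (fun z => ‖ψ ξ z‖ ^ 2) μ)
    {Ω : Type*} [MeasureSpace Ω]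
    (z : ℕ → Ω → Z) (hmeas : ∀ i, Measurable (z i))
    (hlaw : ∀ i, Measure.map (z i) volume = μ)
    (hindep : iIndepFun z volume) :
    ∀ᵐ ω ∂(volume : Measure Ω), ∃ M₀ : ℕ, ∀ m ≥ M₀,
      {ξ : E | ∑ i ∈ Finset.range m, ‖ψ ξ (z i ω)‖ ^ 2 = 0}
        = {ξ : E | ∫ z', ‖ψ ξ z'‖ ^ 2 ∂μ = 0} ∧
      {ξ : E | ∫ z', ‖ψ ξ z'‖ ^ 2 ∂μ = 0} = {ξ : E | ∀ z' : Z, ψ ξ z' = 0} := by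
  have : μ.IsOpenPosMeasure := ⟨fun U hU hne => (hμpos U hU hne).ne'⟩
  have : SecondCountableTopology Z := UniformSpace.secondCountable_of_separable Z
  have hnull : {ξ : E | ∫ z', ‖ψ ξ z'‖ ^ 2 ∂μ = 0} = {ξ : E | ∀ z' : Z, ψ ξ z' = 0} :=
    Set.ext fun ξ => (integral_norm_sq_eq_zero_iff (hcont ξ) (hint ξ)).trans funext_iff
  filter_upwards [hindep.ae_denseRange hmeas hlaw] with ω hdense
  obtain ⟨M₀, hM₀⟩ :=
    IsArtinian.exists_biInf_lt_eq_iInf fun i => LinearMap.ker (hlin (z i ω)).mk'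
  refine ⟨M₀, fun m hm => ⟨?_, hnull⟩⟩
  ext ξ
  have hker := SetLike.ext_iff.mp (hM₀ m hm) ξ
  simp only [Submodule.mem_iInf, LinearMap.mem_ker, IsLinearMap.mk'_apply] at hker
  rw [hnull, Set.mem_ofPred_eq, Set.mem_ofPred_eq,
    Finset.sum_eq_zero_iff_of_nonneg fun _ _ => sq_nonneg _]
  simp only [Finset.mem_range, sq_eq_zero_iff, norm_eq_zero, hker]
  exact ⟨fun h z' => congrFun (hdense.equalizer (hcont ξ) continuous_const (funext h)) z',
    fun h i => h _⟩

/-- Let `E` be a finite-dimensional real inner product space, `Z` a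
separable metric space with a strictly positive Borel probability measure `μ`, and
`ψ : E × Z → ℝ^d` linear in the first argument, continuous in the second, and square
integrable in `z` for each fixed first argument.  For an i.i.d. sequence `z_i` with law
`μ`, almost surely there is `M₀` such that for all `m ≥ M₀` the empirical nullspace
`{ξ : Σ_{i<m} ‖ψ(ξ,z_i)‖² = 0}` equals `{ξ : ∫ ‖ψ(ξ,z)‖² dμ = 0}`, which equals
`{ξ : ψ(ξ,z) = 0 for all z}`. -/
theorem stmt6
    {E : Type*} [NormedAddCommGroup E] [InnerProductSpace ℝ E] [FiniteDimensional ℝ E]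
    {Z : Type*} [MetricSpace Z] [TopologicalSpace.SeparableSpace Z]
    [MeasurableSpace Z] [BorelSpace Z]
    (μ : Measure Z) [IsProbabilityMeasure μ]
    (hμpos : ∀ U : Set Z, IsOpen U → U.Nonempty → 0 < μ U)
    (d : ℕ) (ψ : E → Z → EuclideanSpace ℝ (Fin d))
    (hlin : ∀ z : Z, IsLinearMap ℝ fun ξ : E => ψ ξ z)
    (hcont : ∀ ξ : E, Continuous (ψ ξ))
    (hint : ∀ ξ : E, Integrable (fun z => ‖ψ ξ z‖ ^ 2) μ)
    {Ω : Type*} [MeasureSpace Ω] [IsProbabilityMeasure (volume : Measure Ω)]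
    (z : ℕ → Ω → Z) (hmeas : ∀ i, Measurable (z i))
    (hlaw : ∀ i, Measure.map (z i) volume = μ)
    (hindep : iIndepFun z volume) :
    ∀ᵐ ω ∂(volume : Measure Ω), ∃ M₀ : ℕ, ∀ m ≥ M₀,
      {ξ : E | ∑ i ∈ Finset.range m, ‖ψ ξ (z i ω)‖ ^ 2 = 0}
        = {ξ : E | ∫ z', ‖ψ ξ z'‖ ^ 2 ∂μ = 0} ∧
      {ξ : E | ∫ z', ‖ψ ξ z'‖ ^ 2 ∂μ = 0} = {ξ : E | ∀ z' : Z, ψ ξ z' = 0} :=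
  stmt6_general μ hμpos d ψ hlin hcont hint z hmeas hlaw hindep
end

section
/- Let m ∈ ℕ and let 𝒫 be a finite-dimensional ℝ-linear subspace of the space of polynomial functions ℝ^m → ℝ (functions given by evaluation of real polynomials in m variables). Let M ≥ dim 𝒫. Then for almost every tuple (x₁, …, x_M) ∈ (ℝ^m)^M with respect to Lebesgue measure, the evaluation map 𝒫 → ℝ^M, p ↦ (p(x₁), …, p(x_M)), is injective. -/
/-
A polynomial on `ℝ^N` that is not identically zero vanishes only on a Lebesgue-null set
(induction on `N` and Fubini: a nonzero one-variable polynomial has finitely many roots).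
With `b` a basis of `𝒫`, the evaluation map at `x = (x₁, …, x_M)` is injective iff the Gram
determinant `det (A(x)ᵀ A(x))` of the matrix `A(x)ᵢⱼ = bⱼ(xᵢ)` is nonzero, and this determinant
is a polynomial in the coordinates of `x`. It is not the zero polynomial because some tuple
gives an injective evaluation map: choose points one at a time, each cutting down the subspace
of elements vanishing at the previous ones by one dimension.
-/

open MeasureTheory MvPolynomial Module
open scoped Matrix

theorem Submodule.exists_forall_apply_eq_zero_imp_eq_zero {𝕜 α : Type*} [Field 𝕜] [Nonempty α] :
    ∀ (d : ℕ) (K : Submodule 𝕜 (α → 𝕜)) [FiniteDimensional 𝕜 K], finrank 𝕜 K ≤ d →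
      ∃ x : Fin d → α, ∀ p ∈ K, (∀ i, p (x i) = 0) → p = 0
  | 0, K, _, hK => ⟨Fin.elim0, fun p hp _ => by
      rwa [Submodule.finrank_eq_zero.mp (Nat.le_zero.mp hK), Submodule.mem_bot] at hp⟩
  | d + 1, K, _, hK => by
    by_cases hbot : K = ⊥
    · exact ⟨fun _ => Classical.arbitrary α, fun p hp _ => by rwa [hbot, Submodule.mem_bot] at hp⟩
    obtain ⟨p₀, hp₀K, hp₀⟩ := K.ne_bot_iff.mp hbot
    obtain ⟨a, ha⟩ := Function.ne_iff.mp hp₀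
    have hlt : K ⊓ LinearMap.ker (LinearMap.proj a) < K := inf_lt_left.mpr fun h => ha (h hp₀K)
    obtain ⟨x, hx⟩ :=
      exists_forall_apply_eq_zero_imp_eq_zero d (K ⊓ LinearMap.ker (LinearMap.proj a))
        (by have := Submodule.finrank_lt_finrank_of_lt hlt; omega)
    exact ⟨Fin.cons a x, fun p hp hvan => hx p ⟨hp, hvan 0⟩ fun i => hvan i.succ⟩

theorem Submodule.exists_injective_funLeft_comp_subtype {𝕜 α : Type*} [Field 𝕜] [Nonempty α]
    (K : Submodule 𝕜 (α → 𝕜)) [FiniteDimensional 𝕜 K] {d : ℕ} (hd : finrank 𝕜 K ≤ d) :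
    ∃ x : Fin d → α, Function.Injective (LinearMap.funLeft 𝕜 𝕜 x ∘ₗ K.subtype) := by
  obtain ⟨x, hx⟩ := K.exists_forall_apply_eq_zero_imp_eq_zero d hd
  exact ⟨x, (injective_iff_map_eq_zero _).mpr fun p hp => Subtype.ext (hx p p.2 (congrFun hp))⟩

theorem Submodule.injective_funLeft_comp_subtype_iff {𝕜 α ι κ : Type*} [Field 𝕜] [Fintype ι]
    {K : Submodule 𝕜 (α → 𝕜)} (b : Basis ι 𝕜 K) (x : κ → α) :
    Function.Injective (LinearMap.funLeft 𝕜 𝕜 x ∘ₗ K.subtype) ↔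
      Function.Injective (Matrix.of fun i j => (b j : α → 𝕜) (x i)).mulVec := by
  have : (Matrix.of fun i j => (b j : α → 𝕜) (x i)).mulVec =
      ⇑(LinearMap.funLeft 𝕜 𝕜 x ∘ₗ K.subtype) ∘ b.equivFun.symm := by
    ext c i
    simp [Matrix.mulVec, dotProduct, Basis.equivFun_symm_apply, Finset.sum_apply, mul_comm]
  rw [this, EquivLike.injective_comp]

theorem Matrix.det_transpose_mul_self_ne_zero_iff {m n R : Type*} [Fintype m] [Fintype n]
    [DecidableEq n] [Field R] [LinearOrder R] [IsStrictOrderedRing R] (A : Matrix m n R) :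
    (Aᵀ * A).det ≠ 0 ↔ Function.Injective A.mulVec := by
  rw [← isUnit_iff_ne_zero, ← isUnit_iff_isUnit_det, ← mulVec_injective_iff_isUnit,
    ← coe_mulVecLin, ← coe_mulVecLin, ← LinearMap.ker_eq_bot, ← LinearMap.ker_eq_bot,
    ker_mulVecLin_transpose_mul_self]

theorem MeasureTheory.measurePreserving_curry {ι κ X : Type*} [Fintype ι] [Fintype κ]
    [MeasurableSpace X] (μ : Measure X) [SigmaFinite μ] :
    MeasurePreserving (MeasurableEquiv.curry ι κ X) (Measure.pi fun _ => μ)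
      (Measure.pi fun _ => Measure.pi fun _ => μ) := by
  refine MeasurePreserving.symm _ ⟨(MeasurableEquiv.curry ι κ X).symm.measurable,
    (Measure.pi_eq fun s _ => ?_).symm⟩
  have : (MeasurableEquiv.curry ι κ X).symm ⁻¹' Set.univ.pi s =
      Set.univ.pi fun i => Set.univ.pi fun j => s (i, j) := by
    ext x; simp [MeasurableEquiv.coe_curry_symm]
  rw [MeasurableEquiv.map_apply, this, Measure.pi_pi]
  simp_rw [Measure.pi_pi, Fintype.prod_prod_type]

namespace MvPolynomial

noncomputable def gramDet {R ι κ n : Type*} [CommRing R] [Fintype ι] [Fintype n] [DecidableEq n]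
    (q : n → MvPolynomial κ R) : MvPolynomial (ι × κ) R :=
  let Q : Matrix ι n (MvPolynomial (ι × κ) R) := .of fun i j => rename (Prod.mk i) (q j)
  (Qᵀ * Q).det

theorem eval_gramDet {R ι κ n : Type*} [CommRing R] [Fintype ι] [Fintype n] [DecidableEq n]
    (q : n → MvPolynomial κ R) (x : ι → κ → R) :
    eval (Function.uncurry x) (gramDet q) =
      ((Matrix.of fun i j => eval (x i) (q j))ᵀ * Matrix.of fun i j => eval (x i) (q j)).det := by
  rw [gramDet, RingHom.map_det, RingHom.mapMatrix_apply, Matrix.map_mul, Matrix.transpose_map]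
  congr <;> ext <;> simp [eval_rename_prod_mk]

theorem eval_cons_eq_eval_polynomial_eval {R : Type*} [CommSemiring R] {n : ℕ}
    (p : MvPolynomial (Fin (n + 1)) R) (t : R) (y : Fin n → R) :
    eval (Fin.cons t y : Fin (n + 1) → R) p = eval y ((finSuccEquiv R n p).eval (C t)) := by
  rw [eval_eq_eval_mv_eval', Polynomial.eval_map, ← Polynomial.eval₂_hom, eval_C]

section

variable (μ : Measure ℝ) [NullSingletonClass μ] [SigmaFinite μ]

theorem ae_eval_ne_zero_fin :
    ∀ {n : ℕ} {p : MvPolynomial (Fin n) ℝ}, p ≠ 0 →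
      ∀ᵐ x ∂(Measure.pi fun _ => μ), eval x p ≠ 0
  | 0, p, hp => by
    obtain ⟨c, rfl⟩ := C_surjective (Fin 0) p
    exact .of_forall fun x => by simpa using hp
  | n + 1, p, hp => by
    have hroots : ∀ᵐ t ∂μ, (finSuccEquiv ℝ n p).eval (C t) ≠ 0 :=
      ((Polynomial.finite_setOfPred_isRoot ((finSuccEquiv ℝ n).map_ne_zero_iff.mpr hp)).preimage
        (C_injective (Fin n) ℝ).injOn).countable.ae_notMem μ
    have hcons : ∀ᵐ z ∂μ.prod (Measure.pi fun _ => μ), eval (Fin.cons z.1 z.2) p ≠ 0 := by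
      have hcont : Continuous fun z : ℝ × (Fin n → ℝ) => eval (Fin.cons z.1 z.2) p :=
        (continuous_eval p).comp (continuous_fst.finCons (A := fun _ => ℝ) continuous_snd)
      rw [Measure.ae_prod_iff_ae_ae (isOpen_ne_fun hcont continuous_const).measurableSet]
      filter_upwards [hroots] with t ht
      filter_upwards [ae_eval_ne_zero_fin ht] with y hy
      rwa [eval_cons_eq_eval_polynomial_eval]
    simpa using (measurePreserving_piFinSuccAbove (fun _ => μ) 0).quasiMeasurePreserving.ae hcons

theorem ae_eval_ne_zero {σ : Type*} [Fintype σ] {p : MvPolynomial σ ℝ} (hp : p ≠ 0) :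
    ∀ᵐ x ∂(Measure.pi fun _ => μ), eval x p ≠ 0 := by
  let e := Fintype.equivFin σ
  have hp' : rename e p ≠ 0 := (rename_injective e e.injective).ne_iff' (map_zero _) |>.mpr hp
  have := (measurePreserving_arrowCongr' (fun _ => μ) (fun _ => μ) e (.refl ℝ)
    fun _ => .id μ).quasiMeasurePreserving.ae (ae_eval_ne_zero_fin μ hp')
  simpa [eval_rename, MeasurableEquiv.arrowCongr', Equiv.arrowCongr', Function.comp_def] using this

theorem ae_eval_uncurry_ne_zero {ι κ : Type*} [Fintype ι] [Fintype κ]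
    {p : MvPolynomial (ι × κ) ℝ} (hp : p ≠ 0) :
    ∀ᵐ x ∂(Measure.pi fun _ : ι => Measure.pi fun _ : κ => μ), eval (Function.uncurry x) p ≠ 0 :=
  (measurePreserving_curry μ).symm.quasiMeasurePreserving.ae (ae_eval_ne_zero μ hp)

end

end MvPolynomial

/-- Let `𝒫` be a finite-dimensional subspace of polynomial functions
`ℝ^m → ℝ` and `M ≥ dim 𝒫`.  For almost every tuple `(x₁, …, x_M)` of sample points (with
respect to Lebesgue measure on `(ℝ^m)^M`), the evaluation map `p ↦ (p(x₁), …, p(x_M))` is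
injective on `𝒫`. -/
theorem stmt8 (m : ℕ) (P : Submodule ℝ ((Fin m → ℝ) → ℝ))
    (hpoly : ∀ p ∈ P, ∃ q : MvPolynomial (Fin m) ℝ, ∀ x : Fin m → ℝ,
      p x = MvPolynomial.eval x q)
    [FiniteDimensional ℝ P]
    (M : ℕ) (hM : Module.finrank ℝ P ≤ M) :
    ∀ᵐ x ∂(volume : Measure (Fin M → Fin m → ℝ)),
      Function.Injective
        (fun p : P => (fun i => (p : (Fin m → ℝ) → ℝ) (x i) : Fin M → ℝ)) := by
  obtain ⟨x₀, hx₀⟩ := P.exists_injective_funLeft_comp_subtype hM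
  let b := Module.finBasis ℝ P
  choose q hq using fun j => hpoly (b j) (b j).2
  have key (x : Fin M → Fin m → ℝ) : Function.Injective (LinearMap.funLeft ℝ ℝ x ∘ₗ P.subtype) ↔
      eval (Function.uncurry x) (gramDet q) ≠ 0 := by
    rw [P.injective_funLeft_comp_subtype_iff b, ← Matrix.det_transpose_mul_self_ne_zero_iff,
      eval_gramDet]
    simp_rw [hq]
  have hG : gramDet q ≠ 0 := fun h => (key x₀).mp hx₀ (by rw [h, map_zero])
  filter_upwards [ae_eval_uncurry_ne_zero volume hG] with x hx using (key x).mpr hx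
end

section
/- Let r ≤ n and let c₁, …, c_r ∈ ℝⁿ be such that the vectors {c_k − c₁}_{k=2}^r are linearly independent. Define 𝔤_rad := { (S, v) ∈ ℝ^{n×n} × ℝⁿ : Sᵀ = −S and S c_i = −v for all i = 1, …, r }. Then: (a) 𝔤_rad is an ℝ-linear subspace of ℝ^{n×n} × ℝⁿ of dimension (n−r)(n−r+1)/2; and (b) for every continuously differentiable φ : ℝ^r → ℝ, setting F(x) := φ(‖x − c₁‖², …, ‖x − c_r‖²), every (S, v) ∈ 𝔤_rad satisfies DF(x)(S x + v) = 0 for all x ∈ ℝⁿ, where DF(x) is the Fréchet derivative of F at x. -/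
open Matrix

/-- The radial-feature function `F(x) = φ(‖x−c₁‖², …, ‖x−c_r‖²)`. -/
noncomputable def radFeat {n r : ℕ} (c : Fin r → Fin n → ℝ)
    (φ : (Fin r → ℝ) → ℝ) : (Fin n → ℝ) → ℝ :=
  fun x => φ (fun i => ∑ j, (x j - c i j) ^ 2)

/-!
Identify a skew matrix `S` with the alternating form `(x, y) ↦ xᵀ S y`. An element `(S, v)` of
`𝔤_rad` is determined by `S`, since `v = -S c₁`, and `S` ranges over the alternating forms
vanishing on `W = span {c_k - c₁}`. These have dimension `(n - dim W).choose 2`: enlarging `W` by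
a vector `d ∉ W` lowers the dimension by `n - dim W - 1`, because `B ↦ B d` maps onto the
functionals vanishing on `W + ℝ d`. Without points (`r = 0`) the translation `v` is free, which
gives `(n + 1).choose 2` instead.

For the symmetry, `S x + v = S (x - cᵢ)` is orthogonal to `x - cᵢ` because `S` is skew, so no
feature `‖x - cᵢ‖²` changes to first order in that direction.
-/

open Module LinearMap Submodule

theorem Nat.succ_choose_two (k : ℕ) : (k + 1).choose 2 = k.choose 2 + k := by
  rw [Nat.choose_succ_succ', Nat.choose_one_right, add_comm]

section AlternatingForms

variable {K V : Type*} [Field K] [AddCommGroup V] [Module K V]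

def altFormsVanishingOn (W : Submodule K V) : Submodule K (LinearMap.BilinForm K V) where
  carrier := {B | LinearMap.IsAlt B ∧ W ≤ ker B}
  add_mem' {B C} hB hC := ⟨fun x => by simp [hB.1 x, hC.1 x], fun w hw => by
    simp [mem_ker.1 (hB.2 hw), mem_ker.1 (hC.2 hw)]⟩
  zero_mem' := ⟨fun _ => rfl, fun w _ => by simp⟩
  smul_mem' a B hB := ⟨fun x => by simp [hB.1 x], fun w hw => by simp [mem_ker.1 (hB.2 hw)]⟩

-- Instance search does not find `Submodule.addCommGroup` through the nested `LinearMap` instances.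
instance (W : Submodule K V) : AddCommGroup (altFormsVanishingOn W) :=
  Submodule.addCommGroup (R := K) (M := LinearMap.BilinForm K V) _

theorem mem_altFormsVanishingOn {W : Submodule K V} {B : LinearMap.BilinForm K V} :
    B ∈ altFormsVanishingOn W ↔ LinearMap.IsAlt B ∧ W ≤ ker B :=
  Iff.rfl

theorem altFormsVanishingOn_top : altFormsVanishingOn (⊤ : Submodule K V) = ⊥ :=
  eq_bot_iff.2 fun _ hB => (Submodule.mem_bot K).2 (ker_eq_top.1 (top_le_iff.1 hB.2))

theorem mem_altFormsVanishingOn_sup_span_singleton {W : Submodule K V} {d : V}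
    {B : LinearMap.BilinForm K V} :
    B ∈ altFormsVanishingOn (W ⊔ span K {d}) ↔ B ∈ altFormsVanishingOn W ∧ B d = 0 := by
  simp only [mem_altFormsVanishingOn, sup_le_iff, span_singleton_le_iff_mem, mem_ker, and_assoc]

theorem range_applyₗ_altFormsVanishingOn {W : Submodule K V} {d : V} (hd : d ∉ W) :
    range ((applyₗ d).comp (altFormsVanishingOn W).subtype) =
      (W ⊔ span K {d}).dualAnnihilator := by
  apply le_antisymm
  · rintro _ ⟨⟨B, hBalt, hBW⟩, rfl⟩
    rw [mem_dualAnnihilator]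
    intro w hw
    change B d w = 0
    rw [← LinearMap.IsAlt.neg hBalt w d, neg_eq_zero]
    have hflip : W ⊔ span K {d} ≤ ker (B.flip d) :=
      sup_le (fun w hw => by simp [mem_ker.1 (hBW hw)])
        ((span_singleton_le_iff_mem _ _).2 (hBalt d))
    exact hflip hw
  · -- a preimage of `ψ` is `g ⊗ ψ - ψ ⊗ g`, where `g` vanishes on `W` and `g d = 1`
    intro ψ hψ
    rw [mem_dualAnnihilator] at hψ
    obtain ⟨f, hfd, hWf⟩ := exists_le_ker_of_notMem hd
    set g := (f d)⁻¹ • f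
    have hgd : g d = 1 := inv_mul_cancel₀ hfd
    have hψd : ψ d = 0 := hψ d (mem_sup_right (mem_span_singleton_self d))
    refine ⟨⟨g.smulRight ψ - ψ.smulRight g, fun x => by simp [mul_comm], fun w hw => ?_⟩, ?_⟩
    · have hgw : g w = 0 := by simp [g, mem_ker.1 (hWf hw)]
      simp [hgw, hψ w (mem_sup_left hw)]
    · ext x
      simp [hgd, hψd]

variable [FiniteDimensional K V]

theorem finrank_altFormsVanishingOn_eq_add {W : Submodule K V} {d : V} (hd : d ∉ W) :
    finrank K (altFormsVanishingOn W) =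
      finrank K (altFormsVanishingOn (W ⊔ span K {d})) +
        finrank K (W ⊔ span K {d}).dualAnnihilator := by
  let Φ : altFormsVanishingOn W →ₗ[K] Dual K V := (applyₗ d).comp (altFormsVanishingOn W).subtype
  have hle : altFormsVanishingOn (W ⊔ span K {d}) ≤ altFormsVanishingOn W :=
    fun _ hB => (mem_altFormsVanishingOn_sup_span_singleton.1 hB).1
  have hker : ker Φ = (altFormsVanishingOn (W ⊔ span K {d})).comap
      (altFormsVanishingOn W).subtype := by
    ext ⟨B, hB⟩
    simp [Φ, mem_altFormsVanishingOn_sup_span_singleton, hB]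
  rw [← Φ.finrank_range_add_finrank_ker, range_applyₗ_altFormsVanishingOn hd, hker,
    (comapSubtypeEquivOfLe hle).finrank_eq, add_comm]

theorem finrank_altFormsVanishingOn (W : Submodule K V) :
    finrank K (altFormsVanishingOn W) = (finrank K V - finrank K W).choose 2 := by
  induction hk : finrank K V - finrank K W generalizing W with
  | zero =>
    have hW : W = ⊤ := eq_top_of_finrank_eq (le_antisymm W.finrank_le (by omega))
    subst hW
    rw [altFormsVanishingOn_top]
    simp
  | succ k ih =>
    have hW : W ≠ ⊤ := by rintro rfl; simp at hk
    obtain ⟨d, -, hd⟩ := SetLike.exists_of_lt hW.lt_top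
    have hsup := finrank_sup_span_singleton hd
    have hann := Subspace.finrank_add_finrank_dualAnnihilator_eq (W ⊔ span K {d})
    rw [finrank_altFormsVanishingOn_eq_add hd, ih _ (by omega), Nat.succ_choose_two]
    omega

end AlternatingForms

section Matrix

variable {ι κ K : Type*} [Fintype ι]

theorem Matrix.forall_mem_span_mulVec_eq_zero_iff [CommRing K] {S : Matrix ι ι K}
    {f : κ → ι → K} : (∀ w ∈ span K (Set.range f), S *ᵥ w = 0) ↔ ∀ i, S *ᵥ f i = 0 :=
  (span_le (p := ker S.mulVecLin)).trans Set.range_subset_iff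

variable [DecidableEq ι]

theorem Matrix.isAlt_toLinearMap₂'_iff [CommRing K] [IsAddTorsionFree K] {S : Matrix ι ι K} :
    LinearMap.IsAlt (toLinearMap₂' K S : LinearMap.BilinForm K (ι → K)) ↔ Sᵀ = -S := by
  constructor
  · intro h
    ext i j
    have := (LinearMap.IsAlt.neg h (Pi.single i 1) (Pi.single j 1)).symm
    simp only [toLinearMap₂'_apply', single_one_dotProduct, mulVec_single_one] at this
    simpa using this
  · intro h x
    rw [toLinearMap₂'_apply', ← self_eq_neg]
    conv_lhs => rw [dotProduct_mulVec, ← mulVec_transpose, h, neg_mulVec, neg_dotProduct,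
      dotProduct_comm]

variable [Field K] [IsAddTorsionFree K]

theorem Matrix.toLinearMap₂'_mem_altFormsVanishingOn_iff {S : Matrix ι ι K}
    {W : Submodule K (ι → K)} :
    toLinearMap₂' K S ∈ altFormsVanishingOn W ↔ Sᵀ = -S ∧ ∀ w ∈ W, S *ᵥ w = 0 := by
  rw [mem_altFormsVanishingOn, isAlt_toLinearMap₂'_iff]
  refine and_congr_right fun hS => forall₂_congr fun w _ => ?_
  have hAlt := isAlt_toLinearMap₂'_iff.2 hS
  rw [mem_ker, LinearMap.ext_iff]
  simp only [LinearMap.zero_apply]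
  rw [forall_congr' fun y => LinearMap.IsAlt.eq_iff hAlt (x := w) (y := y)]
  simp only [toLinearMap₂'_apply']
  exact ⟨fun h => funext fun i => by simpa using h (Pi.single i 1), fun h y => by simp [h]⟩

end Matrix

section RadialSymmetries

variable {K ι κ : Type*} [Field K] [Fintype ι] [DecidableEq ι]

def gRad (c : κ → ι → K) : Submodule K (Matrix ι ι K × (ι → K)) where
  carrier := {p | p.1ᵀ = -p.1 ∧ ∀ i, p.1 *ᵥ c i = -p.2}
  add_mem' {p q} hp hq := ⟨by simp [hp.1, hq.1, add_comm], fun i => by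
    simp [add_mulVec, hp.2 i, hq.2 i, add_comm]⟩
  zero_mem' := ⟨by simp, fun i => by simp⟩
  smul_mem' a p hp := ⟨by simp [hp.1], fun i => by simp [smul_mulVec, hp.2 i]⟩

variable [IsAddTorsionFree K]

theorem finrank_gRad_eq_finrank_altFormsVanishingOn (c : κ → ι → K) (i₀ : κ) :
    finrank K (gRad c) =
      finrank K (altFormsVanishingOn (span K (Set.range fun i => c i - c i₀))) := by
  let τ : gRad c →ₗ[K] LinearMap.BilinForm K (ι → K) :=
    (toLinearMap₂' K).toLinearMap ∘ₗ LinearMap.fst K _ _ ∘ₗ (gRad c).subtype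
  have hinj : Function.Injective τ := by
    rintro ⟨⟨S, v⟩, hp⟩ ⟨⟨S', v'⟩, hp'⟩ h
    have hS : S = S' := (toLinearMap₂' K).injective h
    subst hS
    have hv : v = v' := by rw [← neg_neg v, ← hp.2 i₀, hp'.2 i₀, neg_neg]
    subst hv
    rfl
  have hrange : range τ = altFormsVanishingOn (span K (Set.range fun i => c i - c i₀)) := by
    ext B
    constructor
    · rintro ⟨⟨⟨S, v⟩, hS, hc⟩, rfl⟩
      refine toLinearMap₂'_mem_altFormsVanishingOn_iff.2
        ⟨hS, forall_mem_span_mulVec_eq_zero_iff.2 fun i => ?_⟩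
      change S *ᵥ (c i - c i₀) = 0
      rw [mulVec_sub, hc, hc, sub_self]
    · intro hB
      obtain ⟨S, rfl⟩ := (toLinearMap₂' K).surjective B
      obtain ⟨hS, hker⟩ := toLinearMap₂'_mem_altFormsVanishingOn_iff.1 hB
      have hc (i : κ) : S *ᵥ c i = S *ᵥ c i₀ := by
        rw [← sub_eq_zero, ← mulVec_sub]
        exact forall_mem_span_mulVec_eq_zero_iff.1 hker i
      exact ⟨⟨(S, -(S *ᵥ c i₀)), hS, fun i => by rw [hc i, neg_neg]⟩, rfl⟩
  rw [← hrange, LinearMap.finrank_range_of_inj hinj]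

theorem finrank_gRad_of_isEmpty [IsEmpty κ] (c : κ → ι → K) :
    finrank K (gRad c) = (Fintype.card ι + 1).choose 2 := by
  have hmem (S : Matrix ι ι K) :
      toLinearMap₂' K S ∈ altFormsVanishingOn (⊥ : Submodule K (ι → K)) ↔ Sᵀ = -S := by
    simp [toLinearMap₂'_mem_altFormsVanishingOn_iff]
  let e : gRad c ≃ₗ[K] altFormsVanishingOn (⊥ : Submodule K (ι → K)) × (ι → K) :=
    { toFun p := (⟨toLinearMap₂' K p.1.1, (hmem _).2 p.2.1⟩, p.1.2)
      map_add' p q := by ext <;> simp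
      map_smul' a p := by ext <;> simp
      invFun q := ⟨((toLinearMap₂' K).symm (q.1 : LinearMap.BilinForm K (ι → K)), q.2),
        (hmem _).1 (by simp), isEmptyElim⟩
      left_inv p := by simp
      right_inv q := by simp }
  rw [e.finrank_eq, finrank_prod, finrank_altFormsVanishingOn, finrank_bot,
    finrank_fintype_fun_eq_card, Nat.sub_zero, Nat.succ_choose_two]

theorem finrank_gRad_of_linearIndependent {r : ℕ} (c : Fin r → ι → K)
    (hLI : LinearIndependent K fun k : {i : Fin r // 0 < (i : ℕ)} => c k.1 - c ⟨0, k.1.pos⟩) :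
    finrank K (gRad c) = (Fintype.card ι + 1 - r).choose 2 := by
  rcases r with _ | m
  · simpa using finrank_gRad_of_isEmpty c
  have hspan : span K (Set.range fun i => c i - c 0) =
      span K (Set.range fun k : {i : Fin (m + 1) // 0 < (i : ℕ)} => c k.1 - c ⟨0, k.1.pos⟩) := by
    refine le_antisymm (span_le.2 <| Set.range_subset_iff.2 fun i => ?_)
      (span_mono <| Set.range_subset_iff.2 fun k => ⟨k.1, rfl⟩)
    rcases Nat.eq_zero_or_pos i with hi | hi
    · simp [show i = 0 from Fin.ext hi]
    · exact subset_span ⟨⟨i, hi⟩, rfl⟩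
  have hcard : Fintype.card {i : Fin (m + 1) // 0 < (i : ℕ)} = m := by
    have hpos (i : Fin (m + 1)) : 0 < (i : ℕ) ↔ i ≠ 0 := by
      rw [Ne, Fin.ext_iff, Fin.val_zero]
      omega
    simp_rw [hpos]
    rw [Fintype.card_subtype_compl, Fintype.card_fin, Fintype.card_unique, Nat.add_sub_cancel]
  rw [finrank_gRad_eq_finrank_altFormsVanishingOn c 0, finrank_altFormsVanishingOn, hspan, finrank_span_eq_card hLI, hcard,
    finrank_fintype_fun_eq_card, Nat.add_sub_add_right]

end RadialSymmetries

theorem hasFDerivAt_sum_sub_sq {ι : Type*} [Fintype ι] (a x : ι → ℝ) :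
    HasFDerivAt (fun y : ι → ℝ => ∑ j, (y j - a j) ^ 2)
      (∑ j, (2 * (x j - a j)) • (ContinuousLinearMap.proj j : (ι → ℝ) →L[ℝ] ℝ)) x := by
  refine HasFDerivAt.fun_sum fun j _ => ?_
  refine (((hasFDerivAt_apply j x).sub_const (a j)).pow 2).congr_fderiv ?_
  norm_num

theorem fderiv_radFeat_apply_eq_zero {n r : ℕ} (c : Fin r → Fin n → ℝ) {φ : (Fin r → ℝ) → ℝ}
    (hφ : Differentiable ℝ φ) {S : Matrix (Fin n) (Fin n) ℝ} {v : Fin n → ℝ} (hS : Sᵀ = -S)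
    (hc : ∀ i, S *ᵥ c i = -v) (x : Fin n → ℝ) :
    fderiv ℝ (radFeat c φ) x (S *ᵥ x + v) = 0 := by
  have hq : HasFDerivAt (fun y i => ∑ j, (y j - c i j) ^ 2)
      (ContinuousLinearMap.pi fun i =>
        ∑ j, (2 * (x j - c i j)) • (ContinuousLinearMap.proj j : (Fin n → ℝ) →L[ℝ] ℝ)) x :=
    hasFDerivAt_pi.2 fun i => hasFDerivAt_sum_sub_sq (c i) x
  have hF : HasFDerivAt (radFeat c φ) _ x := (hφ _).hasFDerivAt.comp x hq
  -- `S x + v = S (x - c i)` is orthogonal to `x - c i`: no squared distance moves to first order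
  have hstat (i : Fin r) : ∑ j, 2 * (x j - c i j) * (S *ᵥ x + v) j = 0 := by
    have h := isAlt_toLinearMap₂'_iff.2 hS (x - c i)
    rw [toLinearMap₂'_apply', mulVec_sub, hc, sub_neg_eq_add, dotProduct] at h
    simp only [Pi.sub_apply] at h
    simp only [mul_assoc, ← Finset.mul_sum, h, mul_zero]
  rw [hF.fderiv, ContinuousLinearMap.comp_apply]
  convert (fderiv ℝ φ _).map_zero
  ext i
  simpa using hstat i

theorem stmt10_general (n r : ℕ) (c : Fin r → Fin n → ℝ)
    (hLI : LinearIndependent ℝ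
      (fun k : {i : Fin r // 0 < (i : ℕ)} => c k.1 - c ⟨0, k.1.pos⟩)) :
    ∃ g : Submodule ℝ (Matrix (Fin n) (Fin n) ℝ × (Fin n → ℝ)),
      (g : Set (Matrix (Fin n) (Fin n) ℝ × (Fin n → ℝ)))
        = {p | (p.1)ᵀ = -p.1 ∧ ∀ i : Fin r, p.1.mulVec (c i) = -p.2} ∧
      Module.finrank ℝ g = (n - r) * (n - r + 1) / 2 ∧
      ∀ φ : (Fin r → ℝ) → ℝ, ContDiff ℝ 1 φ →
        ∀ (S : Matrix (Fin n) (Fin n) ℝ) (v : Fin n → ℝ),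
          Sᵀ = -S → (∀ i : Fin r, S.mulVec (c i) = -v) →
          ∀ x : Fin n → ℝ, fderiv ℝ (radFeat c φ) x (S.mulVec x + v) = 0 := by
  refine ⟨gRad c, rfl, ?_, fun φ hφ S v hS hc x =>
    fderiv_radFeat_apply_eq_zero c (hφ.differentiable one_ne_zero) hS hc x⟩
  rw [finrank_gRad_of_linearIndependent c hLI, Fintype.card_fin, Nat.choose_two_right]
  rcases le_or_gt r n with h | h
  · rw [show n + 1 - r = n - r + 1 by omega, Nat.add_sub_cancel, mul_comm]
  · simp [show n + 1 - r = 0 by omega, show n - r = 0 by omega]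

/-- For `r ≤ n` and points `c₁, …, c_r` with `{c_k − c₁}` linearly
independent, the set `𝔤_rad = {(S,v) : Sᵀ = −S, S cᵢ = −v}` is a linear subspace of
`ℝ^{n×n} × ℝⁿ` of dimension `(n−r)(n−r+1)/2`, and each of its elements annihilates every
radial-feature function: `DF(x)(Sx + v) = 0` for all `x`. -/
theorem stmt10 (n r : ℕ) (hrn : r ≤ n) (c : Fin r → Fin n → ℝ)
    (hLI : LinearIndependent ℝ
      (fun k : {i : Fin r // 0 < (i : ℕ)} => c k.1 - c ⟨0, k.1.pos⟩)) :
    ∃ g : Submodule ℝ (Matrix (Fin n) (Fin n) ℝ × (Fin n → ℝ)),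
      (g : Set (Matrix (Fin n) (Fin n) ℝ × (Fin n → ℝ)))
        = {p | (p.1)ᵀ = -p.1 ∧ ∀ i : Fin r, p.1.mulVec (c i) = -p.2} ∧
      Module.finrank ℝ g = (n - r) * (n - r + 1) / 2 ∧
      ∀ φ : (Fin r → ℝ) → ℝ, ContDiff ℝ 1 φ →
        ∀ (S : Matrix (Fin n) (Fin n) ℝ) (v : Fin n → ℝ),
          Sᵀ = -S → (∀ i : Fin r, S.mulVec (c i) = -v) →
          ∀ x : Fin n → ℝ, fderiv ℝ (radFeat c φ) x (S.mulVec x + v) = 0 :=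
  stmt10_general n r c hLI
end

section
/- Let r ≤ n and let u₁, …, u_r ∈ ℝⁿ be linearly independent. Define 𝔤_lin := { (S, v) ∈ ℝ^{n×n} × ℝⁿ : Sᵀ = −S, S u_i = 0 for all i = 1, …, r, and ⟨u_i, v⟩ = 0 for all i = 1, …, r }. Then: (a) 𝔤_lin is an ℝ-linear subspace of ℝ^{n×n} × ℝⁿ of dimension (n−r)(n−r+1)/2; and (b) for every continuously differentiable φ : ℝ^r → ℝ, setting F(x) := φ(⟨u₁, x⟩, …, ⟨u_r, x⟩), every (S, v) ∈ 𝔤_lin satisfies DF(x)(S x + v) = 0 for all x ∈ ℝⁿ, where DF(x) is the Fréchet derivative of F at x. -/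
open Matrix

/-- The linear-feature function `F(x) = φ(⟨u₁,x⟩, …, ⟨u_r,x⟩)`. -/
noncomputable def linFeat {n r : ℕ} (u : Fin r → Fin n → ℝ)
    (φ : (Fin r → ℝ) → ℝ) : (Fin n → ℝ) → ℝ :=
  fun x => φ (fun i => ∑ j, u i j * x j)

/-!
Let `E` be a matrix whose columns are an orthonormal basis of `(span uᵢ)ᗮ`, so that `Eᵀ E = 1`
and `ker Eᵀ = span uᵢ`. A skew matrix `S` killing the `uᵢ` kills `y - E Eᵀ y ∈ span uᵢ`, so
`S = S E Eᵀ`, and transposing gives `S = E Eᵀ S`; likewise `v = E Eᵀ v` when `v ⊥ uᵢ`. Hence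
`(S, v) ↦ (Eᵀ S E, Eᵀ v)` identifies `𝔤_lin` with `so(n - r) × ℝⁿ⁻ʳ`, whose dimension is
`C(n - r, 2) + (n - r)`. For the symmetry, `F = φ ∘ U` with `U x = (⟨uᵢ, x⟩)ᵢ`, and
`U (S x + v) = 0` because `⟨uᵢ, S x⟩ = -⟨S uᵢ, x⟩ = 0`.
-/

section SkewSymmetric

variable (R ι : Type*) [CommRing R]

def skewSymmetricSubmodule : Submodule R (Matrix ι ι R) where
  carrier := {A | Aᵀ = -A}
  add_mem' {A B} hA hB := by simp_all [transpose_add, add_comm]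
  zero_mem' := by simp
  smul_mem' c A hA := by simp_all [transpose_smul]

variable {R ι}

theorem mem_skewSymmetricSubmodule {A : Matrix ι ι R} :
    A ∈ skewSymmetricSubmodule R ι ↔ Aᵀ = -A :=
  Iff.rfl

variable {K : Type*} [Field K] [CharZero K] [LinearOrder ι]

def strictUpperOf (f : {p : ι × ι // p.1 < p.2} → K) : Matrix ι ι K :=
  of fun i j => if h : i < j then f ⟨(i, j), h⟩ else 0

def skewSymmetricEquivStrictUpper :
    skewSymmetricSubmodule K ι ≃ₗ[K] ({p : ι × ι // p.1 < p.2} → K) where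
  toFun A p := (A : Matrix ι ι K) p.1.1 p.1.2
  map_add' _ _ := rfl
  map_smul' _ _ := rfl
  invFun f := ⟨strictUpperOf f - (strictUpperOf f)ᵀ, by
    rw [mem_skewSymmetricSubmodule, transpose_sub, transpose_transpose, neg_sub]⟩
  left_inv := by
    rintro ⟨A, hA : Aᵀ = -A⟩
    ext i j
    have hji : A j i = -A i j := congrFun (congrFun hA i) j
    rcases lt_trichotomy i j with h | rfl | h
    · simp [strictUpperOf, h, h.not_gt]
    · simpa [strictUpperOf, CharZero.eq_neg_self_iff, eq_comm] using hji
    · simp [strictUpperOf, h, h.not_gt, hji]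
  right_inv f := by
    ext ⟨⟨i, j⟩, h⟩
    simp [strictUpperOf, h, h.not_gt]

theorem finrank_skewSymmetricSubmodule [Fintype ι] :
    Module.finrank K (skewSymmetricSubmodule K ι) = (Fintype.card ι).choose 2 := by
  rw [skewSymmetricEquivStrictUpper.finrank_eq, Module.finrank_pi, Fintype.card_subtype,
    Fintype.card_product_filter_lt]

end SkewSymmetric

variable {ι : Type*} [Fintype ι] in
theorem exists_transpose_mul_self_eq_one_and_ker_eq (W : Submodule ℝ (ι → ℝ)) :
    ∃ E : Matrix ι (Fin (Fintype.card ι - Module.finrank ℝ W)) ℝ,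
      Eᵀ * E = 1 ∧ ∀ y, Eᵀ *ᵥ y = 0 ↔ y ∈ W := by
  classical
  let W' : Submodule ℝ (EuclideanSpace ℝ ι) :=
    W.map (WithLp.linearEquiv 2 ℝ (ι → ℝ)).symm.toLinearMap
  have hcompl : Module.finrank ℝ W'ᗮ = Fintype.card ι - Module.finrank ℝ W := by
    have := W'.finrank_add_finrank_orthogonal
    rw [finrank_euclideanSpace, LinearEquiv.finrank_map_eq] at this
    omega
  let c := (stdOrthonormalBasis ℝ W'ᗮ).reindex (finCongr hcompl)
  let E : Matrix ι (Fin (Fintype.card ι - Module.finrank ℝ W)) ℝ :=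
    of fun i k => (c k : EuclideanSpace ℝ ι) i
  have hinner : ∀ y k, (Eᵀ *ᵥ y) k = inner ℝ (c k : EuclideanSpace ℝ ι) (WithLp.toLp 2 y) := by
    intro y k
    simp [E, mulVec, dotProduct, EuclideanSpace.inner_eq_star_dotProduct, mul_comm]
  refine ⟨E, ?_, fun y => ?_⟩
  · ext k l
    simpa [E, mul_apply, EuclideanSpace.inner_eq_star_dotProduct, dotProduct, mul_comm,
      one_apply] using orthonormal_iff_ite.1 c.orthonormal k l
  · have hmem : y ∈ W ↔ WithLp.toLp 2 y ∈ W'ᗮᗮ := by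
      rw [W'.orthogonal_orthogonal]
      exact ⟨fun h => ⟨y, h, rfl⟩, fun ⟨z, hz, hzy⟩ => WithLp.toLp_injective 2 hzy ▸ hz⟩
    rw [hmem, funext_iff]
    simp only [hinner, Pi.zero_apply]
    refine ⟨fun h z hz => ?_, fun h k => Submodule.inner_right_of_mem_orthogonal (c k).2 h⟩
    have hzero : (innerₛₗ ℝ (WithLp.toLp 2 y)).comp W'ᗮ.subtype = 0 :=
      c.toBasis.ext fun k => by simpa [real_inner_comm] using h k
    simpa [real_inner_comm] using LinearMap.congr_fun hzero ⟨z, hz⟩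

theorem dotProduct_mulVec_eq_zero_of_transpose_eq_neg {R ι : Type*} [CommRing R] [Fintype ι]
    {S : Matrix ι ι R} (hS : Sᵀ = -S) {a : ι → R} (ha : S *ᵥ a = 0) (x : ι → R) :
    a ⬝ᵥ S *ᵥ x = 0 := by
  rw [dotProduct_mulVec, ← mulVec_transpose, hS, neg_mulVec, ha, neg_zero, zero_dotProduct]

theorem fderiv_linFeat_apply_eq_zero {n r : ℕ} {u : Fin r → Fin n → ℝ} {φ : (Fin r → ℝ) → ℝ}
    {x : Fin n → ℝ} (hφ : DifferentiableAt ℝ φ (of u *ᵥ x)) {w : Fin n → ℝ}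
    (hw : ∀ i, u i ⬝ᵥ w = 0) : fderiv ℝ (linFeat u φ) x w = 0 := by
  let L := LinearMap.toContinuousLinearMap (of u).mulVecLin
  have hL : L w = 0 := funext hw
  change fderiv ℝ (φ ∘ L) x w = 0
  rw [(hφ.hasFDerivAt.comp (f := L) x L.hasFDerivAt).fderiv, ContinuousLinearMap.comp_apply, hL,
    map_zero]

section LinFeatSymmetries

variable {ι σ κ : Type*} [Fintype ι] [Fintype κ] [DecidableEq κ] {u : σ → ι → ℝ}

variable (u) in
def linFeatSymmetries : Submodule ℝ (Matrix ι ι ℝ × (ι → ℝ)) where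
  carrier := {p | p.1ᵀ = -p.1 ∧ (∀ i, p.1 *ᵥ u i = 0) ∧ ∀ i, u i ⬝ᵥ p.2 = 0}
  add_mem' := by
    rintro ⟨S, v⟩ ⟨T, w⟩ ⟨hS, hSu, hv⟩ ⟨hT, hTu, hw⟩
    refine ⟨by simp [hS, hT, add_comm], fun i => ?_, fun i => ?_⟩
    · simp [add_mulVec, hSu i, hTu i]
    · simp [dotProduct_add, hv i, hw i]
  zero_mem' := by simp
  smul_mem' := by
    rintro c ⟨S, v⟩ ⟨hS, hSu, hv⟩
    exact ⟨by simp [hS], fun i => by simp [smul_mulVec, hSu i], fun i => by simp [hv i]⟩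

theorem mulVec_eq_zero_of_mem_span {S : Matrix ι ι ℝ} (hS : ∀ i, S *ᵥ u i = 0) {y : ι → ℝ}
    (hy : y ∈ Submodule.span ℝ (Set.range u)) : S *ᵥ y = 0 :=
  (Submodule.span_le (p := LinearMap.ker S.mulVecLin)).2 (Set.range_subset_iff.2 hS) hy

theorem dotProduct_eq_zero_of_mem_span {v : ι → ℝ} (hv : ∀ i, u i ⬝ᵥ v = 0) {y : ι → ℝ}
    (hy : y ∈ Submodule.span ℝ (Set.range u)) : y ⬝ᵥ v = 0 :=
  (Submodule.span_le (p := LinearMap.ker ((dotProductBilin ℝ ℝ).flip v))).2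
    (Set.range_subset_iff.2 hv) hy

variable {E : Matrix ι κ ℝ} (hE : Eᵀ * E = 1)
  (hker : ∀ y, Eᵀ *ᵥ y = 0 ↔ y ∈ Submodule.span ℝ (Set.range u))
include hE hker

theorem sub_mulVec_transpose_mulVec_mem_span (y : ι → ℝ) :
    y - E *ᵥ Eᵀ *ᵥ y ∈ Submodule.span ℝ (Set.range u) :=
  (hker _).1 (by rw [mulVec_sub, mulVec_mulVec, mulVec_mulVec, hE, Matrix.one_mul, sub_self])

theorem mul_transpose_mul_mul_mul_transpose_eq_self {S : Matrix ι ι ℝ} (hS : Sᵀ = -S)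
    (hSu : ∀ i, S *ᵥ u i = 0) : E * (Eᵀ * S * E) * Eᵀ = S := by
  have hSP : S * (E * Eᵀ) = S := ext_iff_mulVec.2 fun y => by
    have := mulVec_eq_zero_of_mem_span hSu (sub_mulVec_transpose_mulVec_mem_span hE hker y)
    rwa [mulVec_sub, sub_eq_zero, eq_comm, mulVec_mulVec, mulVec_mulVec, Matrix.mul_assoc] at this
  have hPS : E * Eᵀ * S = S := by
    simpa [transpose_mul, hS] using congrArg transpose hSP
  calc E * (Eᵀ * S * E) * Eᵀ = E * Eᵀ * S * (E * Eᵀ) := by simp only [Matrix.mul_assoc]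
    _ = S := by rw [hPS, hSP]

theorem mulVec_transpose_mulVec_eq_self {v : ι → ℝ} (hv : ∀ i, u i ⬝ᵥ v = 0) :
    E *ᵥ Eᵀ *ᵥ v = v := by
  set z := v - E *ᵥ Eᵀ *ᵥ v
  have hz : z ∈ Submodule.span ℝ (Set.range u) := sub_mulVec_transpose_mulVec_mem_span hE hker v
  have hzz : z ⬝ᵥ z = 0 := by
    rw [dotProduct_sub, dotProduct_eq_zero_of_mem_span hv hz, dotProduct_mulVec,
      ← mulVec_transpose, (hker z).2 hz, zero_dotProduct, sub_zero]
  exact (sub_eq_zero.1 (dotProduct_self_eq_zero.1 hzz)).symm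

noncomputable def linFeatSymmetriesEquiv :
    linFeatSymmetries u ≃ₗ[ℝ] skewSymmetricSubmodule ℝ κ × (κ → ℝ) where
  toFun p := (⟨Eᵀ * p.1.1 * E, by
    rw [mem_skewSymmetricSubmodule, transpose_mul, transpose_mul, transpose_transpose, p.2.1]
    simp [Matrix.mul_assoc]⟩, Eᵀ *ᵥ p.1.2)
  map_add' p q := by ext <;> simp [Matrix.mul_add, Matrix.add_mul, mulVec_add]
  map_smul' c p := by ext <;> simp [mulVec_smul]
  invFun q := ⟨(E * (q.1 : Matrix κ κ ℝ) * Eᵀ, E *ᵥ q.2), by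
    have hEu : ∀ i, Eᵀ *ᵥ u i = 0 := fun i => (hker _).2 (Submodule.subset_span ⟨i, rfl⟩)
    refine ⟨?_, fun i => ?_, fun i => ?_⟩
    · rw [transpose_mul, transpose_mul, transpose_transpose, q.1.2]
      simp [Matrix.mul_assoc]
    · rw [← mulVec_mulVec, hEu, mulVec_zero]
    · rw [dotProduct_mulVec, ← mulVec_transpose, hEu, zero_dotProduct]⟩
  left_inv p := Subtype.ext <| Prod.ext
    (mul_transpose_mul_mul_mul_transpose_eq_self hE hker p.2.1 p.2.2.1)
    (mulVec_transpose_mulVec_eq_self hE hker p.2.2.2)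
  right_inv := by
    rintro ⟨⟨M, _⟩, w⟩
    refine Prod.ext (Subtype.ext ?_) ?_
    · change Eᵀ * (E * M * Eᵀ) * E = M
      rw [show Eᵀ * (E * M * Eᵀ) * E = Eᵀ * E * M * (Eᵀ * E) by simp only [Matrix.mul_assoc], hE,
        Matrix.one_mul, Matrix.mul_one]
    · change Eᵀ *ᵥ E *ᵥ w = w
      rw [mulVec_mulVec, hE, one_mulVec]

end LinFeatSymmetries

theorem stmt11_general (n r : ℕ) (u : Fin r → Fin n → ℝ)
    (hLI : LinearIndependent ℝ u) :
    ∃ g : Submodule ℝ (Matrix (Fin n) (Fin n) ℝ × (Fin n → ℝ)),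
      (g : Set (Matrix (Fin n) (Fin n) ℝ × (Fin n → ℝ)))
        = {p | (p.1)ᵀ = -p.1 ∧ (∀ i : Fin r, p.1.mulVec (u i) = 0) ∧
            ∀ i : Fin r, ∑ j, u i j * p.2 j = 0} ∧
      Module.finrank ℝ g = (n - r) * (n - r + 1) / 2 ∧
      ∀ φ : (Fin r → ℝ) → ℝ, ContDiff ℝ 1 φ →
        ∀ (S : Matrix (Fin n) (Fin n) ℝ) (v : Fin n → ℝ),
          Sᵀ = -S → (∀ i : Fin r, S.mulVec (u i) = 0) →
          (∀ i : Fin r, ∑ j, u i j * v j = 0) →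
          ∀ x : Fin n → ℝ, fderiv ℝ (linFeat u φ) x (S.mulVec x + v) = 0 := by
  obtain ⟨E, hE, hker⟩ :=
    exists_transpose_mul_self_eq_one_and_ker_eq (Submodule.span ℝ (Set.range u))
  refine ⟨linFeatSymmetries u, rfl, ?_, fun φ hφ S v hS hSu hv x => ?_⟩
  · rw [(linFeatSymmetriesEquiv hE hker).finrank_eq, Module.finrank_prod,
      finrank_skewSymmetricSubmodule, Module.finrank_fin_fun, Fintype.card_fin, Fintype.card_fin,
      finrank_span_eq_card hLI, Fintype.card_fin, Nat.choose_two_right, ← Nat.triangle_succ,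
      Nat.add_sub_cancel, mul_comm]
  · refine fderiv_linFeat_apply_eq_zero (hφ.differentiable one_ne_zero _) fun i => ?_
    rw [dotProduct_add, dotProduct_mulVec_eq_zero_of_transpose_eq_neg hS (hSu i), zero_add]
    exact hv i

/-- For `r ≤ n` and linearly independent `u₁, …, u_r`, the set
`𝔤_lin = {(S,v) : Sᵀ = −S, S uᵢ = 0, ⟨uᵢ, v⟩ = 0}` is a linear subspace of
`ℝ^{n×n} × ℝⁿ` of dimension `(n−r)(n−r+1)/2`, and each of its elements annihilates every
linear-feature function: `DF(x)(Sx + v) = 0` for all `x`. -/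
theorem stmt11 (n r : ℕ) (hrn : r ≤ n) (u : Fin r → Fin n → ℝ)
    (hLI : LinearIndependent ℝ u) :
    ∃ g : Submodule ℝ (Matrix (Fin n) (Fin n) ℝ × (Fin n → ℝ)),
      (g : Set (Matrix (Fin n) (Fin n) ℝ × (Fin n → ℝ)))
        = {p | (p.1)ᵀ = -p.1 ∧ (∀ i : Fin r, p.1.mulVec (u i) = 0) ∧
            ∀ i : Fin r, ∑ j, u i j * p.2 j = 0} ∧
      Module.finrank ℝ g = (n - r) * (n - r + 1) / 2 ∧
      ∀ φ : (Fin r → ℝ) → ℝ, ContDiff ℝ 1 φ →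
        ∀ (S : Matrix (Fin n) (Fin n) ℝ) (v : Fin n → ℝ),
          Sᵀ = -S → (∀ i : Fin r, S.mulVec (u i) = 0) →
          (∀ i : Fin r, ∑ j, u i j * v j = 0) →
          ∀ x : Fin n → ℝ, fderiv ℝ (linFeat u φ) x (S.mulVec x + v) = 0 :=
  stmt11_general n r u hLI
end

section
/- Let n, r ∈ ℕ with r ≥ 1, let c₁, …, c_r ∈ ℝⁿ, let S ∈ ℝ^{n×n} be skew-symmetric (Sᵀ = −S) and v ∈ ℝⁿ. Suppose that Σ_{k=1}^r k ‖x − c_k‖^{2(k−1)} ⟨x − c_k, S x + v⟩ = 0 for every x ∈ ℝⁿ. Then S c_k = −v for every k = 1, …, r. -/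
open Matrix Polynomial

/-- If `S` is skew-symmetric, `v ∈ ℝⁿ`, and
`Σ_{k=1}^r k ‖x − c_k‖^{2(k−1)} ⟨x − c_k, Sx + v⟩ = 0` for every `x ∈ ℝⁿ`,
then `S c_k = −v` for every `k`. -/
theorem stmt15 (n r : ℕ) (hr : 1 ≤ r) (c : Fin r → Fin n → ℝ)
    (S : Matrix (Fin n) (Fin n) ℝ) (hS : Sᵀ = -S) (v : Fin n → ℝ)
    (h : ∀ x : Fin n → ℝ,
      ∑ k : Fin r, ((k : ℕ) + 1 : ℝ) * (∑ j, (x j - c k j) ^ 2) ^ (k : ℕ) *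
        (∑ j, (x j - c k j) * (S.mulVec x + v) j) = 0) :
    ∀ k : Fin r, S.mulVec (c k) = -v := by
  rcases Nat.eq_zero_or_pos n with hn | hn
  · intro k; funext i; exact absurd i.isLt (by omega)
  have hskew : ∀ a b, S a b = - S b a := by
    intro a b
    have := congrFun (congrFun hS b) a
    simpa [Matrix.transpose_apply] using this
  set w : Fin r → Fin n → ℝ := fun k => S.mulVec (c k) + v with hw
  set β : Fin r → ℝ := fun k => ∑ j, c k j * v j with hβ
  -- Step 1: rewrite the linear factor using skew-symmetry
  have hlin : ∀ (x : Fin n → ℝ) (k : Fin r),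
      (∑ j, (x j - c k j) * (S.mulVec x + v) j)
        = (∑ j, x j * w k j) - β k := by
    intro x k
    have hA : (∑ j, ∑ i, x j * (S j i * x i)) = 0 := by
      have h1 : (∑ j, ∑ i, x j * (S j i * x i)) = ∑ i, ∑ j, x j * (S j i * x i) :=
        Finset.sum_comm
      have h2 : (∑ a : Fin n, ∑ b : Fin n, x b * (S b a * x a))
          = ∑ a : Fin n, ∑ b : Fin n, -(x a * (S a b * x b)) := by
        refine Finset.sum_congr rfl fun a _ => Finset.sum_congr rfl fun b _ => ?_
        rw [hskew b a]; ring
      have h3 : (∑ a : Fin n, ∑ b : Fin n, -(x a * (S a b * x b)))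
          = -∑ a : Fin n, ∑ b : Fin n, (x a * (S a b * x b)) := by
        simp
      have := h1.trans (h2.trans h3)
      linarith
    have hB : (∑ j, ∑ i, c k j * (S j i * x i))
        = -∑ j, ∑ i, x j * (S j i * c k i) := by
      have h1 : (∑ j, ∑ i, c k j * (S j i * x i)) = ∑ i, ∑ j, c k j * (S j i * x i) :=
        Finset.sum_comm
      have h2 : (∑ a : Fin n, ∑ b : Fin n, c k b * (S b a * x a))
          = ∑ a : Fin n, ∑ b : Fin n, -(x a * (S a b * c k b)) := by
        refine Finset.sum_congr rfl fun a _ => Finset.sum_congr rfl fun b _ => ?_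
        rw [hskew b a]; ring
      rw [h1, h2]
      simp
    simp only [Matrix.mulVec, dotProduct, Pi.add_apply, hw, hβ]
    simp only [sub_mul, mul_add, Finset.mul_sum, Finset.sum_sub_distrib,
      Finset.sum_add_distrib]
    rw [hA, hB]
    ring
  have H : ∀ x : Fin n → ℝ,
      ∑ k : Fin r, ((k : ℕ) + 1 : ℝ) * (∑ j, (x j - c k j) ^ 2) ^ (k : ℕ) *
        ((∑ j, x j * w k j) - β k) = 0 := by
    intro x
    calc ∑ k : Fin r, ((k : ℕ) + 1 : ℝ) * (∑ j, (x j - c k j) ^ 2) ^ (k : ℕ) *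
          ((∑ j, x j * w k j) - β k)
        = ∑ k : Fin r, ((k : ℕ) + 1 : ℝ) * (∑ j, (x j - c k j) ^ 2) ^ (k : ℕ) *
          (∑ j, (x j - c k j) * (S.mulVec x + v) j) :=
          Finset.sum_congr rfl fun k _ => by rw [hlin x k]
      _ = 0 := h x
  -- Polynomial setup, for each coordinate i
  set Q : Fin n → Fin r → ℝ[X] := fun i k =>
    C 1 * X ^ 2 + C (-(2 * c k i)) * X + C (∑ j, (c k j) ^ 2) with hQ
  set P : Fin n → ℝ[X] := fun i => ∑ k : Fin r,
    C ((k : ℕ) + 1 : ℝ) * (Q i k) ^ (k : ℕ) * (C (w k i) * X + C (-β k)) with hP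
  have hsq : ∀ (i : Fin n) (t : ℝ) (k : Fin r),
      (∑ j, ((if j = i then t else 0) - c k j) ^ 2)
        = 1 * t ^ 2 + (-(2 * c k i)) * t + (∑ j, (c k j) ^ 2) := by
    intro i t k
    have step : ∀ j, ((if j = i then t else 0) - c k j) ^ 2
        = (c k j) ^ 2 + (if j = i then 1 * t ^ 2 + (-(2 * c k j)) * t else 0) := by
      intro j
      by_cases hji : j = i <;> simp [hji] <;> ring
    rw [Finset.sum_congr rfl fun j _ => step j, Finset.sum_add_distrib,
      Finset.sum_ite_eq' Finset.univ i]
    simp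
    ring
  have hdot : ∀ (i : Fin n) (t : ℝ) (g : Fin n → ℝ),
      (∑ j, (if j = i then t else 0) * g j) = t * g i := by
    intro i t g
    have step : ∀ j, (if j = i then t else 0) * g j
        = (if j = i then t * g j else 0) := by
      intro j; by_cases hji : j = i <;> simp [hji]
    rw [Finset.sum_congr rfl fun j _ => step j, Finset.sum_ite_eq' Finset.univ i]
    simp
  have hP0 : ∀ i : Fin n, P i = 0 := by
    intro i
    apply Polynomial.funext
    intro t
    rw [eval_zero, hP]
    have heval : eval t (∑ k : Fin r,
        C ((k : ℕ) + 1 : ℝ) * (Q i k) ^ (k : ℕ) * (C (w k i) * X + C (-β k)))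
        = ∑ k : Fin r, ((k : ℕ) + 1 : ℝ) *
            (∑ j, ((if j = i then t else 0) - c k j) ^ 2) ^ (k : ℕ) *
            ((∑ j, (if j = i then t else 0) * w k j) - β k) := by
      rw [eval_finset_sum]
      refine Finset.sum_congr rfl fun k _ => ?_
      rw [hsq i t k, hdot i t (w k), hQ]
      simp only [eval_mul, eval_add, eval_pow, eval_C, eval_X]
      ring
    rw [heval]
    exact H (fun m => if m = i then t else 0)
  -- degree and coefficient facts
  have hQmonic : ∀ (i : Fin n) (k : Fin r), (Q i k).Monic := by
    intro i k
    have hrw : Q i k = X ^ 2 + (C (-(2 * c k i)) * X + C (∑ j, (c k j) ^ 2)) := by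
      rw [hQ]; simp only [Polynomial.C_1, one_mul]; ring
    rw [hrw]
    exact monic_X_pow_add (lt_of_le_of_lt (degree_linear_le) (by norm_num))
  have hpowdeg : ∀ (i : Fin n) (k : Fin r),
      ((Q i k) ^ (k : ℕ)).natDegree = 2 * (k : ℕ) := by
    intro i k
    rw [(hQmonic i k).natDegree_pow]
    have : (Q i k).natDegree = 2 := by rw [hQ]; exact natDegree_quadratic one_ne_zero
    rw [this]; ring
  have hpowcoeff : ∀ (i : Fin n) (k : Fin r),
      ((Q i k) ^ (k : ℕ)).coeff (2 * (k : ℕ)) = 1 := by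
    intro i k
    have hm : ((Q i k) ^ (k : ℕ)).Monic := (hQmonic i k).pow _
    have := hm.coeff_natDegree
    rwa [hpowdeg i k] at this
  have hdegterm : ∀ (i : Fin n) (k : Fin r),
      (C ((k : ℕ) + 1 : ℝ) * (Q i k) ^ (k : ℕ) * (C (w k i) * X + C (-β k))).natDegree
        ≤ 2 * (k : ℕ) + 1 := by
    intro i k
    calc (C ((k : ℕ) + 1 : ℝ) * (Q i k) ^ (k : ℕ) *
            (C (w k i) * X + C (-β k))).natDegree
        ≤ (C ((k : ℕ) + 1 : ℝ) * (Q i k) ^ (k : ℕ)).natDegree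
            + (C (w k i) * X + C (-β k)).natDegree := natDegree_mul_le
      _ ≤ ((C ((k : ℕ) + 1 : ℝ)).natDegree + ((Q i k) ^ (k : ℕ)).natDegree) + 1 :=
            add_le_add natDegree_mul_le natDegree_linear_le
      _ ≤ 2 * (k : ℕ) + 1 := by rw [natDegree_C, hpowdeg i k]; omega
  -- main downward induction
  have main : ∀ m : ℕ, ∀ k : Fin r, r - (k : ℕ) ≤ m → (w k = 0 ∧ β k = 0) := by
    intro m
    induction m with
    | zero => intro k hk; exact absurd hk (by have := k.isLt; omega)
    | succ m ih =>
      intro k hk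
      have hgt : ∀ k' : Fin r, (k : ℕ) < (k' : ℕ) → w k' = 0 ∧ β k' = 0 := by
        intro k' hk'
        exact ih k' (by have := k'.isLt; omega)
      have hzero : ∀ (i : Fin n) (d : ℕ) (k' : Fin r), (k : ℕ) < (k' : ℕ) →
          (C ((k' : ℕ) + 1 : ℝ) * (Q i k') ^ (k' : ℕ)
            * (C (w k' i) * X + C (-β k'))).coeff d = 0 := by
        intro i d k' hk'
        obtain ⟨hw', hβ'⟩ := hgt k' hk'
        have : w k' i = 0 := by rw [hw']; rfl
        rw [this, hβ']
        simp
      have hsmall : ∀ (i : Fin n) (d : ℕ) (k' : Fin r), 2 * (k' : ℕ) + 1 < d →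
          (C ((k' : ℕ) + 1 : ℝ) * (Q i k') ^ (k' : ℕ)
            * (C (w k' i) * X + C (-β k'))).coeff d = 0 := by
        intro i d k' hd
        exact coeff_eq_zero_of_natDegree_lt (lt_of_le_of_lt (hdegterm i k') hd)
      have hepos : (((k : ℕ) : ℝ) + 1) ≠ 0 := by positivity
      have hwk : w k = 0 := by
        funext i
        have hc : (P i).coeff (2 * (k : ℕ) + 1) = 0 := by rw [hP0 i]; simp
        rw [hP, finset_sum_coeff] at hc
        rw [Finset.sum_eq_single_of_mem k (Finset.mem_univ k)] at hc
        · -- main term coefficient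
          have hterm : C ((k : ℕ) + 1 : ℝ) * (Q i k) ^ (k : ℕ)
                * (C (w k i) * X + C (-β k))
              = C ((k : ℕ) + 1 : ℝ) * C (w k i) * ((Q i k) ^ (k : ℕ) * X)
                + C ((k : ℕ) + 1 : ℝ) * C (-β k) * ((Q i k) ^ (k : ℕ)) := by ring
          rw [hterm] at hc
          rw [coeff_add, ← C_mul, coeff_C_mul, ← C_mul, coeff_C_mul,
            coeff_mul_X, hpowcoeff i k,
            coeff_eq_zero_of_natDegree_lt (by rw [hpowdeg i k]; omega :
              ((Q i k) ^ (k : ℕ)).natDegree < 2 * (k : ℕ) + 1)] at hc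
          have : (((k : ℕ) : ℝ) + 1) * w k i = 0 := by linarith [hc]
          have := mul_eq_zero.mp this
          rcases this with h0 | h0
          · exact absurd h0 hepos
          · exact h0
        · intro k' _ hne
          rcases lt_trichotomy ((k' : ℕ)) ((k : ℕ)) with hlt | heq | hgt'
          · exact hsmall i _ k' (by omega)
          · exact absurd (Fin.ext heq) hne
          · exact hzero i _ k' hgt'
      refine ⟨hwk, ?_⟩
      -- β k = 0, using coefficient 2k at coordinate i0
      set i : Fin n := ⟨0, hn⟩ with hi0
      have hc : (P i).coeff (2 * (k : ℕ)) = 0 := by rw [hP0 i]; simp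
      rw [hP, finset_sum_coeff] at hc
      rw [Finset.sum_eq_single_of_mem k (Finset.mem_univ k)] at hc
      · have hwki : w k i = 0 := by rw [hwk]; rfl
        rw [hwki] at hc
        have hterm : C ((k : ℕ) + 1 : ℝ) * (Q i k) ^ (k : ℕ)
              * (C (0 : ℝ) * X + C (-β k))
            = C ((k : ℕ) + 1 : ℝ) * C (-β k) * ((Q i k) ^ (k : ℕ)) := by
          rw [map_zero]; ring
        rw [hterm, ← C_mul, coeff_C_mul, hpowcoeff i k] at hc
        have : (((k : ℕ) : ℝ) + 1) * (-β k) = 0 := by linarith [hc]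
        rcases mul_eq_zero.mp this with h0 | h0
        · exact absurd h0 hepos
        · linarith
      · intro k' _ hne
        rcases lt_trichotomy ((k' : ℕ)) ((k : ℕ)) with hlt | heq | hgt'
        · exact hsmall i _ k' (by omega)
        · exact absurd (Fin.ext heq) hne
        · exact hzero i _ k' hgt'
  intro k
  have hwk : w k = 0 := (main r k (by omega)).1
  have : S.mulVec (c k) + v = 0 := hwk
  exact eq_neg_of_add_eq_zero_left this
end

section
/- Let n, r ∈ ℕ with 1 ≤ r ≤ n, let u₁, …, u_r ∈ ℝⁿ be orthonormal, let U ∈ ℝ^{n×r} be the matrix with columns u₁, …, u_r, and let D = diag(1, 2, …, r). Let S ∈ ℝ^{n×n} be skew-symmetric (Sᵀ = −S) and v ∈ ℝⁿ. Suppose that ⟨U D Uᵀ x, S x + v⟩ = 0 for every x ∈ ℝⁿ (equivalently, xᵀ U D Uᵀ S x + xᵀ U D Uᵀ v = 0 for all x). Then S U = 0 and Uᵀ v = 0, i.e., S u_k = 0 and ⟨u_k, v⟩ = 0 for every k = 1, …, r. -/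
open Matrix

/-- Let `u₁, …, u_r` be orthonormal in `ℝⁿ`, `D = diag(1,…,r)`, `S`
skew-symmetric and `v ∈ ℝⁿ`.  If `⟨U D Uᵀ x, Sx + v⟩ = 0` for every `x`, i.e.
`Σ_k k ⟨u_k, x⟩ ⟨u_k, Sx + v⟩ = 0`, then `S u_k = 0` and `⟨u_k, v⟩ = 0` for every `k`. -/
theorem stmt16 (n r : ℕ) (hr : 1 ≤ r) (hrn : r ≤ n) (u : Fin r → Fin n → ℝ)
    (hu : ∀ i j : Fin r, (∑ k, u i k * u j k) = if i = j then (1 : ℝ) else 0)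
    (S : Matrix (Fin n) (Fin n) ℝ) (hS : Sᵀ = -S) (v : Fin n → ℝ)
    (h : ∀ x : Fin n → ℝ,
      ∑ k : Fin r, ((k : ℕ) + 1 : ℝ) * (∑ j, u k j * x j) *
        (∑ j, u k j * (S.mulVec x + v) j) = 0) :
    ∀ k : Fin r, S.mulVec (u k) = 0 ∧ (∑ j, u k j * v j) = 0 := by
  classical
  have hskew : ∀ x y : Fin n → ℝ, x ⬝ᵥ S.mulVec y = -(y ⬝ᵥ S.mulVec x) := by
    intro x y
    rw [Matrix.dotProduct_mulVec, ← Matrix.mulVec_transpose, hS, Matrix.neg_mulVec]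
    rw [dotProduct_comm]
    simp
  have horth : ∀ i j : Fin r, u i ⬝ᵥ u j = if i = j then (1:ℝ) else 0 := hu
  have h' : ∀ x : Fin n → ℝ,
      (∑ k : Fin r, ((k:ℕ)+1:ℝ) * (u k ⬝ᵥ x) * (u k ⬝ᵥ S.mulVec x))
      + (∑ k : Fin r, ((k:ℕ)+1:ℝ) * (u k ⬝ᵥ x) * (u k ⬝ᵥ v)) = 0 := by
    intro x
    have hx := h x
    rw [← Finset.sum_add_distrib, ← hx]
    refine Finset.sum_congr rfl fun k _ => ?_
    simp only [dotProduct, Pi.add_apply, mul_add, Finset.mul_sum, Finset.sum_add_distrib]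
  have hQ : ∀ x, (∑ k : Fin r, ((k:ℕ)+1:ℝ) * (u k ⬝ᵥ x) * (u k ⬝ᵥ S.mulVec x)) = 0 := by
    intro x
    have h1 := h' x
    have h2 := h' (-x)
    rw [Matrix.mulVec_neg] at h2
    simp only [dotProduct_neg, neg_mul, mul_neg, neg_neg, Finset.sum_neg_distrib] at h2
    linarith
  have hL : ∀ x, (∑ k : Fin r, ((k:ℕ)+1:ℝ) * (u k ⬝ᵥ x) * (u k ⬝ᵥ v)) = 0 := by
    intro x
    have h1 := h' x
    have := hQ x
    linarith
  have hv : ∀ i : Fin r, u i ⬝ᵥ v = 0 := by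
    intro i
    have hLi := hL (u i)
    rw [Finset.sum_eq_single i] at hLi
    · rw [horth i i, if_pos rfl, mul_one] at hLi
      have hpos : ((i:ℕ):ℝ) + 1 > 0 := by positivity
      rcases mul_eq_zero.mp hLi with hc | hc
      · exact absurd hc (ne_of_gt hpos)
      · exact hc
    · intro k _ hk
      rw [horth k i, if_neg hk]
      ring
    · simp
  have hB : ∀ x y : Fin n → ℝ,
      ∑ k : Fin r, ((k:ℕ)+1:ℝ) *
        ((u k ⬝ᵥ x) * (u k ⬝ᵥ S.mulVec y) + (u k ⬝ᵥ y) * (u k ⬝ᵥ S.mulVec x)) = 0 := by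
    intro x y
    have hxy := hQ (x + y)
    have hx := hQ x
    have hy := hQ y
    rw [Matrix.mulVec_add] at hxy
    have expand : ∀ k : Fin r,
        ((k:ℕ)+1:ℝ) * (u k ⬝ᵥ (x+y)) * (u k ⬝ᵥ (S.mulVec x + S.mulVec y))
        = ((k:ℕ)+1:ℝ) * (u k ⬝ᵥ x) * (u k ⬝ᵥ S.mulVec x)
          + ((k:ℕ)+1:ℝ) * (u k ⬝ᵥ y) * (u k ⬝ᵥ S.mulVec y)
          + ((k:ℕ)+1:ℝ) * ((u k ⬝ᵥ x) * (u k ⬝ᵥ S.mulVec y) + (u k ⬝ᵥ y) * (u k ⬝ᵥ S.mulVec x)) := by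
      intro k
      rw [dotProduct_add, dotProduct_add]
      ring
    rw [Finset.sum_congr rfl (fun k _ => expand k), Finset.sum_add_distrib,
      Finset.sum_add_distrib] at hxy
    linarith
  -- evaluate hB on pairs of basis vectors
  have hBij : ∀ i j : Fin r,
      ((i:ℕ)+1:ℝ) * (u i ⬝ᵥ S.mulVec (u j)) + ((j:ℕ)+1:ℝ) * (u j ⬝ᵥ S.mulVec (u i)) = 0 := by
    intro i j
    have hb := hB (u i) (u j)
    have split : ∀ k : Fin r,
        ((k:ℕ)+1:ℝ) * ((u k ⬝ᵥ u i) * (u k ⬝ᵥ S.mulVec (u j)) + (u k ⬝ᵥ u j) * (u k ⬝ᵥ S.mulVec (u i)))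
        = (if k = i then ((i:ℕ)+1:ℝ) * (u i ⬝ᵥ S.mulVec (u j)) else 0)
          + (if k = j then ((j:ℕ)+1:ℝ) * (u j ⬝ᵥ S.mulVec (u i)) else 0) := by
      intro k
      rw [horth k i, horth k j]
      by_cases hki : k = i <;> by_cases hkj : k = j
      · have hij : i = j := hki.symm.trans hkj
        subst hij
        simp [hki]
        ring
      · have hij : ¬ i = j := fun e => hkj (hki.trans e)
        simp [hki, hkj, hij]
      · have hij : ¬ j = i := fun e => hki (hkj.trans e)
        simp [hki, hkj, hij]
      · simp [hki, hkj]
    rw [Finset.sum_congr rfl (fun k _ => split k), Finset.sum_add_distrib,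
      Finset.sum_ite_eq' Finset.univ i, Finset.sum_ite_eq' Finset.univ j] at hb
    simpa using hb
  have ha0 : ∀ i j : Fin r, u i ⬝ᵥ S.mulVec (u j) = 0 := by
    intro i j
    have hsk : u i ⬝ᵥ S.mulVec (u j) = -(u j ⬝ᵥ S.mulVec (u i)) := hskew (u i) (u j)
    have h1 := hBij i j
    by_cases hij : i = j
    · subst hij; linarith
    · have hne : ((i:ℕ):ℝ) ≠ ((j:ℕ):ℝ) := by
        exact_mod_cast fun hh => hij (Fin.ext hh)
      have h2 : (((i:ℕ):ℝ) - ((j:ℕ):ℝ)) * (u i ⬝ᵥ S.mulVec (u j)) = 0 := by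
        have hji : u j ⬝ᵥ S.mulVec (u i) = -(u i ⬝ᵥ S.mulVec (u j)) := by
          rw [hsk]; ring
        rw [hji] at h1
        linear_combination h1
      rcases mul_eq_zero.mp h2 with hc | hc
      · exact absurd (sub_eq_zero.mp hc) hne
      · exact hc
  intro k
  constructor
  · set w : Fin n → ℝ := S.mulVec (u k) with hw
    have hb := hB (u k) w
    have split : ∀ m : Fin r,
        ((m:ℕ)+1:ℝ) * ((u m ⬝ᵥ u k) * (u m ⬝ᵥ S.mulVec w) + (u m ⬝ᵥ w) * (u m ⬝ᵥ S.mulVec (u k)))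
        = (if m = k then ((k:ℕ)+1:ℝ) * (u k ⬝ᵥ S.mulVec w) else 0) := by
      intro m
      rw [horth m k, ha0 m k]
      by_cases hmk : m = k <;> simp [hmk] <;> try ring
    rw [Finset.sum_congr rfl (fun m _ => split m),
      Finset.sum_ite_eq' Finset.univ k] at hb
    simp only [Finset.mem_univ, if_pos] at hb
    have hks : u k ⬝ᵥ S.mulVec w = 0 := by
      have hpos : ((k:ℕ):ℝ) + 1 > 0 := by positivity
      rcases mul_eq_zero.mp hb with hc | hc
      · exact absurd hc (ne_of_gt hpos)
      · exact hc
    have hww : w ⬝ᵥ w = 0 := by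
      have := hskew (u k) w
      rw [hks] at this
      rw [hw] at this ⊢
      linarith [this]
    have hnn : ∀ m : Fin n, 0 ≤ w m * w m := fun m => mul_self_nonneg _
    funext m
    have := (Finset.sum_eq_zero_iff_of_nonneg (fun m _ => hnn m)).mp hww m (Finset.mem_univ m)
    exact mul_self_eq_zero.mp this
  · exact hv k
end

section
/- Let F : ℝ^m → ℝⁿ be continuously differentiable. Define Γ : ℝ^m → ℝ^m × ℝⁿ by Γ(x) := (x, F(x)) and Q : ℝ^m × ℝⁿ → ℝ^m × ℝⁿ by Q(x, y) := (x, F(x)). Fix x₀ ∈ ℝ^m and let P := DQ(Γ(x₀)) be the Fréchet derivative of Q at the point (x₀, F(x₀)), so that P(h, k) = (h, DF(x₀)h). Then: (a) P is a linear projection, P ∘ P = P, and its range equals the range of DΓ(x₀), i.e., the tangent space T_{(x₀,F(x₀))} graph(F) = { (h, DF(x₀)h) : h ∈ ℝ^m }; and (b) for any linear maps A : ℝ^m → ℝ^m and B : ℝⁿ → ℝⁿ, (0, B(F(x₀)) − DF(x₀)(A x₀)) = −(I − P)(−A x₀, −B(F(x₀))), so the Lie derivative ℒ_{A,B}F(x₀)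 := B(F(x₀)) − DF(x₀)(A x₀) vanishes if and only if the infinitesimal generator (−A x₀, −B(F(x₀))) is tangent to graph(F) at (x₀, F(x₀)). -/
/-!
The map `Q = Γ ∘ π` fixes the first coordinate and replaces the second by `F` of it, so by the
chain rule its derivative at a point of the graph is `P (h, k) = (h, DF(x₀) h)`: a linear map that
forgets `k` and lands on the graph of `DF(x₀)`, where it is the identity. Hence `P` is a projection
onto the tangent space `range DΓ(x₀) = graph DF(x₀)`, and `I - P` sends `(h, k)` to
`(0, k - DF(x₀) h)`, whose second entry at the infinitesimal generator is the Lie derivative.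
-/

open ContinuousLinearMap

variable {𝕜 E F : Type*} [NontriviallyNormedField 𝕜] [NormedAddCommGroup E] [NormedSpace 𝕜 E]
  [NormedAddCommGroup F] [NormedSpace 𝕜 F]

def graphProjection (L : E →L[𝕜] F) : E × F →L[𝕜] E × F :=
  (fst 𝕜 E F).prod (L.comp (fst 𝕜 E F))

section GraphProjection

variable (L : E →L[𝕜] F)

@[simp]
theorem graphProjection_apply (h : E) (k : F) : graphProjection L (h, k) = (h, L h) := rfl

theorem graphProjection_comp_self :
    (graphProjection L).comp (graphProjection L) = graphProjection L :=
  ContinuousLinearMap.ext fun _ => rfl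

theorem range_graphProjection : Set.range (graphProjection L) = {p : E × F | p.2 = L p.1} := by
  ext p
  constructor
  · rintro ⟨⟨h, k⟩, rfl⟩
    rfl
  · intro hp
    exact ⟨p, Prod.ext rfl hp.symm⟩

theorem neg_sub_graphProjection_apply_neg (a : E) (b : F) :
    -((-a, -b) - graphProjection L (-a, -b)) = ((0 : E), b - L a) := by
  simp [neg_add_eq_sub]

end GraphProjection

theorem ContinuousLinearMap.range_id_prod (L : E →L[𝕜] F) :
    Set.range ((ContinuousLinearMap.id 𝕜 E).prod L) = {p : E × F | p.2 = L p.1} := by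
  ext p
  constructor
  · rintro ⟨h, rfl⟩
    rfl
  · intro hp
    exact ⟨p.1, Prod.ext rfl hp.symm⟩

theorem neg_mem_setOf_snd_eq_iff (L : E →L[𝕜] F) (a : E) (b : F) :
    ((-a, -b) : E × F) ∈ {p : E × F | p.2 = L p.1} ↔ b - L a = 0 := by
  simp [sub_eq_zero]

section Derivatives

variable {f : E → F} {L : E →L[𝕜] F} {x₀ : E}

theorem HasFDerivAt.graph (hf : HasFDerivAt f L x₀) :
    HasFDerivAt (fun x => (x, f x)) ((ContinuousLinearMap.id 𝕜 E).prod L) x₀ :=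
  (hasFDerivAt_id x₀).prodMk hf

theorem HasFDerivAt.graph_comp_fst (hf : HasFDerivAt f L x₀) (y : F) :
    HasFDerivAt (fun p : E × F => (p.1, f p.1)) (graphProjection L) (x₀, y) :=
  hasFDerivAt_fst.prodMk (hf.comp (x₀, y) hasFDerivAt_fst)

end Derivatives

/-- For `F : ℝ^m → ℝⁿ` continuously differentiable, `Γ(x) = (x, F x)`,
`Q(x,y) = (x, F x)`, and `P = DQ(x₀, F x₀)`: (a) `P (h,k) = (h, DF(x₀) h)`, `P` is a
projection whose range is the tangent space to `graph F` at `(x₀, F x₀)`, namely the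
range of `DΓ(x₀)`, i.e. `{(h, DF(x₀) h)}`; and (b) for any linear maps `A`, `B`,
`(0, B (F x₀) − DF(x₀)(A x₀)) = −(I − P)(−A x₀, −B (F x₀))`, so the Lie derivative
vanishes iff the infinitesimal generator `(−A x₀, −B (F x₀))` is tangent to the graph. -/
theorem stmt19 (m n : ℕ) (F : (Fin m → ℝ) → (Fin n → ℝ)) (hF : ContDiff ℝ 1 F)
    (x₀ : Fin m → ℝ) :
    let Γ : (Fin m → ℝ) → (Fin m → ℝ) × (Fin n → ℝ) := fun x => (x, F x)
    let Q : (Fin m → ℝ) × (Fin n → ℝ) → (Fin m → ℝ) × (Fin n → ℝ) := fun p => (p.1, F p.1)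
    let P := fderiv ℝ Q (x₀, F x₀)
    (∀ (h : Fin m → ℝ) (k : Fin n → ℝ), P (h, k) = (h, fderiv ℝ F x₀ h)) ∧
    P.comp P = P ∧
    Set.range (fun w => P w) = Set.range (fun h => fderiv ℝ Γ x₀ h) ∧
    Set.range (fun w => P w)
      = {p : (Fin m → ℝ) × (Fin n → ℝ) | p.2 = fderiv ℝ F x₀ p.1} ∧
    ∀ (A : (Fin m → ℝ) →ₗ[ℝ] (Fin m → ℝ)) (B : (Fin n → ℝ) →ₗ[ℝ] (Fin n → ℝ)),
      (((0 : Fin m → ℝ), B (F x₀) - fderiv ℝ F x₀ (A x₀))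
          = -((((-(A x₀), -(B (F x₀))) : (Fin m → ℝ) × (Fin n → ℝ))
              - P (-(A x₀), -(B (F x₀)))))) ∧
      (B (F x₀) - fderiv ℝ F x₀ (A x₀) = 0 ↔
        (((-(A x₀), -(B (F x₀))) : (Fin m → ℝ) × (Fin n → ℝ))
          ∈ Set.range (fun h => fderiv ℝ Γ x₀ h))) := by
  intro Γ Q P
  have hDF : HasFDerivAt F (fderiv ℝ F x₀) x₀ :=
    ((hF.differentiable one_ne_zero) x₀).hasFDerivAt
  have hP : P = graphProjection (fderiv ℝ F x₀) := (hDF.graph_comp_fst (F x₀)).fderiv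
  have hTangent : Set.range (fun h => fderiv ℝ Γ x₀ h)
      = {p : (Fin m → ℝ) × (Fin n → ℝ) | p.2 = fderiv ℝ F x₀ p.1} := by
    rw [hDF.graph.fderiv]
    exact range_id_prod _
  have hRange := range_graphProjection (fderiv ℝ F x₀)
  rw [hP]
  refine ⟨graphProjection_apply _, graphProjection_comp_self _, hRange.trans hTangent.symm,
    hRange, fun A B => ⟨(neg_sub_graphProjection_apply_neg _ _ _).symm, ?_⟩⟩
  rw [hTangent, neg_mem_setOf_snd_eq_iff]
end
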